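/- arXiv:1509.04023 — 3 statements merged into one kernel-verified Lean document; each statement's English description precedes it below -/
import Mathlib

section
/- Generator identity underlying the exponential duality: In the exchangeable case, for every x ∈ ℰ, every finitely supported α ∈ [0,∞)^G, and every finitely supported κ ∈ (ℕ₀^M)^G, all of the series below converge absolutely and (Ω_X H((α,κ),·))(x) = (Ω_{(α,κ)} H(·,x))(α,κ) + β(α,κ) · H((α,κ),x), where Ω_X acts on the x-variable, Ω_{(α,κ)} acts on the (α,κ)-variables, and β(α,κ) := γ Σ_{ξ∈G} ( Σ_{m=1}^M C(κ^m_ξ,2) − α_ξ κ̄_ξ + K κ̄_ξ ) with C(k,2) = k(k−1)/2. -/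
/-!
The duality function is `exp (-∑ α_ξ x̄_ξ)` times the monomial `∏ (x^m_ξ)^(κ^m_ξ)`. Splitting off
the factor of one coordinate shows that `∂H/∂x^m_ξ` and `∂H/∂α_ξ` are again combinations of duality
functions, with one dual particle removed at `ξ` or with an extra factor `x̄_ξ`.

Since `α` and `κ` are finitely supported, every series reduces to a finite sum over sites, except
the migration terms. Those converge absolutely because `x ∈ ℰ` and the Liggett–Spitzer weight
satisfies `a(η,ξ) β(ξ) ≤ R ρ(η)`, and they match term by term: a dual particle jumping from `ξ` to
`η` multiplies `H` by `x_η / x_ξ`, and moving `α` with `a` is adjoint to moving `x̄` with `ā`.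
What remains is an algebraic identity between the reaction terms at each site, which uses
`x^m_ξ H(κ - e(m,ξ)) = H(κ)` for `κ^m_ξ ≥ 1`; its defect is exactly `β(α,κ) H`.
-/

open MeasureTheory Filter Set
open scoped ENNReal NNReal BigOperators Classical

noncomputable section

/-! ### Random walk kernels and the Liggett–Spitzer weight -/

structure IsRWKernel {G : Type} [AddCommGroup G] (a : G → G → ℝ) : Prop where
  nonneg : ∀ ξ η, 0 ≤ a ξ η
  le_one : ∀ ξ η, a ξ η ≤ 1
  homog : ∀ η ξ : G, a η ξ = a 0 (ξ - η)
  total : HasSum (fun ξ : G => a 0 ξ) 1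

/-- symmetrized kernel â -/
def ahat {G : Type} (a : G → G → ℝ) (ξ η : G) : ℝ := (a ξ η + a η ξ) / 2

/-- reversed kernel ā -/
def abar {G : Type} (a : G → G → ℝ) (ξ η : G) : ℝ := a η ξ

/-- n-step iterates of a kernel -/
noncomputable def kiter {G : Type} (p : G → G → ℝ) : ℕ → G → G → ℝ
  | 0 => fun η ξ => if η = ξ then 1 else 0
  | (n + 1) => fun η ξ => ∑' ζ : G, kiter p n η ζ * p ζ ξ

/-- the Liggett–Spitzer weight ρ -/
noncomputable def LSweight {G : Type} (a : G → G → ℝ) (R : ℝ) (β : G → ℝ) (ξ : G) : ℝ :=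
  ∑' η : G, ∑' n : ℕ, ((R / 2) ^ n)⁻¹ * kiter (ahat a) n η ξ * β η

/-- the standing assumptions: `a` is a random walk kernel, `R > 2`,
`β` strictly positive and summable. -/
def IsLSData {G : Type} [AddCommGroup G] (a : G → G → ℝ) (R : ℝ) (β : G → ℝ) : Prop :=
  IsRWKernel a ∧ 2 < R ∧ (∀ η, 0 < β η) ∧ Summable β

/-- continuous-time transition kernel associated with a discrete kernel -/
noncomputable def ctk {G : Type} (p : G → G → ℝ) (t : ℝ) (η ξ : G) : ℝ :=
  Real.exp (-t) * ∑' n : ℕ, t ^ n / (n.factorial : ℝ) * kiter p n η ξ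

/-! ### configurations and state spaces -/

/-- total mass at a site -/
def xbar {G : Type} {M : ℕ} (x : G → Fin M → ℝ) (ξ : G) : ℝ := ∑ m, x ξ m

/-- the Liggett–Spitzer state space ℰ -/
def stateE {G : Type} (ρ : G → ℝ) (M : ℕ) : Set (G → Fin M → ℝ) :=
  {x | (∀ ξ m, 0 ≤ x ξ m) ∧ Summable (fun ξ => ρ ξ * xbar x ξ)}

/-- the particle state space ℰ^par = ℰ ∩ (ℕ₀^M)^G -/
def statePar {G : Type} (ρ : G → ℝ) (M : ℕ) : Set (G → Fin M → ℝ) :=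
  {x | x ∈ stateE ρ M ∧ ∀ ξ m, ∃ k : ℕ, x ξ m = (k : ℝ)}

/-- the rescaled particle state space εℰ^par -/
def stateParEps {G : Type} (ρ : G → ℝ) (M : ℕ) (ε : ℝ) : Set (G → Fin M → ℝ) :=
  {z | ∃ w ∈ statePar ρ M, z = ε • w}

/-- the configuration with a single type-`m` particle at site `ξ` -/
def evec {G : Type} {M : ℕ} (m : Fin M) (ξ : G) : G → Fin M → ℝ :=
  fun η n => if η = ξ ∧ n = m then 1 else 0

/-! ### martingale problems -/

/-- càdlàg paths -/
def IsCadlag {S : Type*} [TopologicalSpace S] (f : ℝ → S) : Prop :=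
  (∀ t : ℝ, ContinuousWithinAt f (Set.Ici t) t) ∧
  ∀ t : ℝ, ∃ L, Filter.Tendsto f (nhdsWithin t (Set.Iio t)) (nhds L)

/-- A solution of the `(Gen, Dom, ν)` martingale problem: an adapted stochastic
process on a filtered probability space, with paths satisfying `PathProp`
(càdlàg resp. continuous), taking values, at nonnegative times, in the state
space `E`, with initial law `ν`, such that for every `f ∈ Dom` the process
`f(X t) − ∫_0^t Gen f (X s) ds` is a martingale. -/
structure MPSol (S : Type) [TopologicalSpace S] [MeasurableSpace S]
    (Gen : (S → ℝ) → S → ℝ) (Dom : Set (S → ℝ)) (E : Set S)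
    (PathProp : (ℝ → S) → Prop) (ν : Measure S) where
  (Ω : Type)
  [mΩ : MeasurableSpace Ω]
  (P : Measure Ω)
  (isProb : IsProbabilityMeasure P)
  (F : MeasureTheory.Filtration ℝ mΩ)
  (X : ℝ → Ω → S)
  (adapted : MeasureTheory.Adapted F X)
  (paths : ∀ ω, PathProp fun t => X t ω)
  (mem_state : ∀ ω t, 0 ≤ t → X t ω ∈ E)
  (init_law : Measure.map (X 0) P = ν)
  (mart : ∀ f ∈ Dom,
    MeasureTheory.Martingale
      (fun t ω => f (X t ω) - ∫ s in (0:ℝ)..t, Gen f (X s ω)) F P)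

attribute [instance] MPSol.mΩ

/-! ### the particle generator -/

/-- the particle generator Ω_Z, with site sums restricted to `G'`
(take `G' = Set.univ` for the full generator). -/
noncomputable def particleGenR {G : Type} {M : ℕ} (a : G → G → ℝ)
    (γ K : Fin M → ℝ) (lam : Fin M → Fin M → ℝ) (G' : Set G)
    (f : (G → Fin M → ℝ) → ℝ) (z : G → Fin M → ℝ) : ℝ :=
  (∑' q : Fin M × G × G, (if q.2.1 ∈ G' ∧ q.2.2 ∈ G' then (1:ℝ) else 0) *
      (z q.2.1 q.1 * a q.2.1 q.2.2 *
        (f (z + evec q.1 q.2.2 - evec q.1 q.2.1) - f z)))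
  + (∑' q : Fin M × G, (if q.2 ∈ G' then (1:ℝ) else 0) *
      (γ q.1 * (1 / 2 + K q.1) * z q.2 q.1 * (f (z + evec q.1 q.2) - f z)))
  + (∑' q : Fin M × G, (if q.2 ∈ G' then (1:ℝ) else 0) *
      (γ q.1 * (1 / 2 + ∑ n, lam q.1 n * z q.2 n) * z q.2 q.1 *
        (f (z - evec q.1 q.2) - f z)))

/-- the particle generator Ω_Z -/
noncomputable def particleGen {G : Type} {M : ℕ} (a : G → G → ℝ)
    (γ K : Fin M → ℝ) (lam : Fin M → Fin M → ℝ) :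
    ((G → Fin M → ℝ) → ℝ) → (G → Fin M → ℝ) → ℝ :=
  particleGenR a γ K lam Set.univ

/-- the domain D(Ω_Z) of the particle generator: bounded measurable functions
for which the defining series converge absolutely on the state space and for
which Ω_Z f is bounded on the state space. -/
def particleDomR {G : Type} {M : ℕ} (a : G → G → ℝ) (γ K : Fin M → ℝ)
    (lam : Fin M → Fin M → ℝ) (G' : Set G) (ρ : G → ℝ) :
    Set ((G → Fin M → ℝ) → ℝ) :=
  {f | Measurable f ∧ (∃ C, ∀ z, |f z| ≤ C) ∧
    (∀ z ∈ statePar ρ M,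
      Summable (fun q : Fin M × G × G => |(if q.2.1 ∈ G' ∧ q.2.2 ∈ G' then (1:ℝ) else 0) *
        (z q.2.1 q.1 * a q.2.1 q.2.2 *
          (f (z + evec q.1 q.2.2 - evec q.1 q.2.1) - f z))|) ∧
      Summable (fun q : Fin M × G => |(if q.2 ∈ G' then (1:ℝ) else 0) *
        (γ q.1 * (1 / 2 + K q.1) * z q.2 q.1 * (f (z + evec q.1 q.2) - f z))|) ∧
      Summable (fun q : Fin M × G => |(if q.2 ∈ G' then (1:ℝ) else 0) *
        (γ q.1 * (1 / 2 + ∑ n, lam q.1 n * z q.2 n) * z q.2 q.1 *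
          (f (z - evec q.1 q.2) - f z))|)) ∧
    ∃ C, ∀ z ∈ statePar ρ M, |particleGenR a γ K lam G' f z| ≤ C}

def particleDom {G : Type} {M : ℕ} (a : G → G → ℝ) (γ K : Fin M → ℝ)
    (lam : Fin M → Fin M → ℝ) (ρ : G → ℝ) : Set ((G → Fin M → ℝ) → ℝ) :=
  particleDomR a γ K lam Set.univ ρ

/-! ### the ε-rescaled particle generator -/

/-- the ε-rescaled particle generator Ω_{Z^ε}, with site sums restricted
to `G'` (take `G' = Set.univ` for the full generator). -/
noncomputable def epsParticleGenR {G : Type} {M : ℕ} (a : G → G → ℝ)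
    (γ K : Fin M → ℝ) (lam : Fin M → Fin M → ℝ) (ε : ℝ) (G' : Set G)
    (f : (G → Fin M → ℝ) → ℝ) (z : G → Fin M → ℝ) : ℝ :=
  (∑' q : Fin M × G × G, (if q.2.1 ∈ G' ∧ q.2.2 ∈ G' then (1:ℝ) else 0) *
      ((z q.2.1 q.1 / ε) * a q.2.1 q.2.2 *
        (f (z + ε • evec q.1 q.2.2 - ε • evec q.1 q.2.1) - f z)))
  + (∑' q : Fin M × G, (if q.2 ∈ G' then (1:ℝ) else 0) *
      ((z q.2 q.1 / ε) * (γ q.1 / ε) * (1 / 2 + ε * K q.1) *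
        (f (z + ε • evec q.1 q.2) - f z)))
  + (∑' q : Fin M × G, (if q.2 ∈ G' then (1:ℝ) else 0) *
      ((z q.2 q.1 / ε) * (γ q.1 / ε) * (1 / 2 + ε * ∑ n, lam q.1 n * z q.2 n) *
        (f (z - ε • evec q.1 q.2) - f z)))

/-- the domain of the ε-rescaled particle generator. -/
def epsParticleDomR {G : Type} {M : ℕ} (a : G → G → ℝ) (γ K : Fin M → ℝ)
    (lam : Fin M → Fin M → ℝ) (ε : ℝ) (G' : Set G) (ρ : G → ℝ) :
    Set ((G → Fin M → ℝ) → ℝ) :=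
  {f | Measurable f ∧ (∃ C, ∀ z, |f z| ≤ C) ∧
    (∀ z ∈ stateParEps ρ M ε,
      Summable (fun q : Fin M × G × G => |(if q.2.1 ∈ G' ∧ q.2.2 ∈ G' then (1:ℝ) else 0) *
        ((z q.2.1 q.1 / ε) * a q.2.1 q.2.2 *
          (f (z + ε • evec q.1 q.2.2 - ε • evec q.1 q.2.1) - f z))|) ∧
      Summable (fun q : Fin M × G => |(if q.2 ∈ G' then (1:ℝ) else 0) *
        ((z q.2 q.1 / ε) * (γ q.1 / ε) * (1 / 2 + ε * K q.1) *
          (f (z + ε • evec q.1 q.2) - f z))|) ∧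
      Summable (fun q : Fin M × G => |(if q.2 ∈ G' then (1:ℝ) else 0) *
        ((z q.2 q.1 / ε) * (γ q.1 / ε) * (1 / 2 + ε * ∑ n, lam q.1 n * z q.2 n) *
          (f (z - ε • evec q.1 q.2) - f z))|)) ∧
    ∃ C, ∀ z ∈ stateParEps ρ M ε, |epsParticleGenR a γ K lam ε G' f z| ≤ C}

/-! ### the diffusion generator -/

/-- coordinate partial derivative ∂f/∂x^m_ξ -/
noncomputable def pderiv {G : Type} {M : ℕ} (m : Fin M) (ξ : G)
    (f : (G → Fin M → ℝ) → ℝ) (x : G → Fin M → ℝ) : ℝ :=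
  deriv (fun t : ℝ => f (x + t • evec m ξ)) 0

/-- all coordinate partial derivatives up to order three exist and are
continuous -/
def SmoothCoord3 {G : Type} {M : ℕ} (f : (G → Fin M → ℝ) → ℝ) : Prop :=
  Continuous f ∧
  (∀ (m : Fin M) (ξ : G),
    (∀ x, DifferentiableAt ℝ (fun t : ℝ => f (x + t • evec m ξ)) 0) ∧
    Continuous (pderiv m ξ f)) ∧
  (∀ (m₁ m₂ : Fin M) (ξ₁ ξ₂ : G),
    (∀ x, DifferentiableAt ℝ (fun t : ℝ => pderiv m₁ ξ₁ f (x + t • evec m₂ ξ₂)) 0) ∧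
    Continuous (pderiv m₂ ξ₂ (pderiv m₁ ξ₁ f))) ∧
  (∀ (m₁ m₂ m₃ : Fin M) (ξ₁ ξ₂ ξ₃ : G),
    (∀ x, DifferentiableAt ℝ
      (fun t : ℝ => pderiv m₂ ξ₂ (pderiv m₁ ξ₁ f) (x + t • evec m₃ ξ₃)) 0) ∧
    Continuous (pderiv m₃ ξ₃ (pderiv m₂ ξ₂ (pderiv m₁ ξ₁ f))))

/-- the diffusion generator Ω_X (recall ā(ξ,η) = a(η,ξ)) -/
noncomputable def diffGen {G : Type} {M : ℕ} (a : G → G → ℝ) (γ K : Fin M → ℝ)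
    (lam : Fin M → Fin M → ℝ)
    (f : (G → Fin M → ℝ) → ℝ) (x : G → Fin M → ℝ) : ℝ :=
  (∑' q : Fin M × G,
    ((∑' η : G, a η q.2 * (x η q.1 - x q.2 q.1))
      + γ q.1 * x q.2 q.1 * (K q.1 - ∑ n, lam q.1 n * x q.2 n))
    * pderiv q.1 q.2 f x)
  + (1 / 2) * ∑' q : Fin M × G, γ q.1 * x q.2 q.1 * pderiv q.1 q.2 (pderiv q.1 q.2 f) x

/-- the domain D(Ω_X): bounded continuous functions with continuous coordinate
partial derivatives up to order three, for which the series converge absolutely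
on ℰ and Ω_X f is bounded on ℰ. -/
def diffDom {G : Type} {M : ℕ} (a : G → G → ℝ) (γ K : Fin M → ℝ)
    (lam : Fin M → Fin M → ℝ) (ρ : G → ℝ) : Set ((G → Fin M → ℝ) → ℝ) :=
  {f | (∃ C, ∀ x, |f x| ≤ C) ∧ SmoothCoord3 f ∧
    (∀ x ∈ stateE ρ M,
      (∀ (m : Fin M) (ξ : G), Summable (fun η : G => |a η ξ * (x η m - x ξ m)|)) ∧
      Summable (fun q : Fin M × G =>
        |((∑' η : G, a η q.2 * (x η q.1 - x q.2 q.1))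
          + γ q.1 * x q.2 q.1 * (K q.1 - ∑ n, lam q.1 n * x q.2 n))
          * pderiv q.1 q.2 f x|) ∧
      Summable (fun q : Fin M × G =>
        |γ q.1 * x q.2 q.1 * pderiv q.1 q.2 (pderiv q.1 q.2 f) x|)) ∧
    ∃ C, ∀ x ∈ stateE ρ M, |diffGen a γ K lam f x| ≤ C}
/-! ### the dual process (exchangeable case) -/

/-- configuration with a single dual (type-m) particle at ξ -/
def ekap {G : Type} {M : ℕ} (m : Fin M) (ξ : G) : G → Fin M → ℕ :=
  fun η n => if η = ξ ∧ n = m then 1 else 0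

/-- total number of dual particles at a site -/
def kapbar {G : Type} {M : ℕ} (κ : G → Fin M → ℕ) (ξ : G) : ℕ := ∑ m, κ ξ m

/-- indicator configuration at a single site (in the α variables) -/
def e1 {G : Type} (ξ : G) : G → ℝ := fun η => if η = ξ then 1 else 0

/-- coordinate partial derivative ∂f/∂α_ξ in the α variables -/
noncomputable def aderiv {G : Type} {M : ℕ} (ξ : G)
    (f : (G → ℝ) × (G → Fin M → ℕ) → ℝ) (p : (G → ℝ) × (G → Fin M → ℕ)) : ℝ :=
  deriv (fun t : ℝ => f (p.1 + t • e1 ξ, p.2)) 0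

/-- the dual generator Ω_{(α,κ)} of the exchangeable model -/
noncomputable def dualGen {G : Type} {M : ℕ} (a : G → G → ℝ) (γ K lam : ℝ)
    (f : (G → ℝ) × (G → Fin M → ℕ) → ℝ) (p : (G → ℝ) × (G → Fin M → ℕ)) : ℝ :=
  (∑' q : Fin M × G × G,
    (p.2 q.2.1 q.1 : ℝ) * a q.2.2 q.2.1 *
      (f (p.1, fun η n => p.2 η n + ekap q.1 q.2.2 η n - ekap q.1 q.2.1 η n) - f p))
  + γ * (∑' q : Fin M × G,
      ((p.2 q.2 q.1 : ℝ) * ((p.2 q.2 q.1 : ℝ) - 1) / 2) *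
        (f (p.1, fun η n => p.2 η n - ekap q.1 q.2 η n) - f p))
  + (∑' q : G × G, a q.1 q.2 * (p.1 q.2 - p.1 q.1) * aderiv q.1 f p)
  + γ * (∑' ξ : G, p.1 ξ * (K - p.1 ξ / 2) * aderiv ξ f p)
  + γ * lam * (∑' ξ : G, p.1 ξ * aderiv ξ (aderiv ξ f) p)
  + γ * lam * (∑' ξ : G, (kapbar p.2 ξ : ℝ) * aderiv ξ f p)

/-- for each fixed κ, f(⬝,κ) is continuous with continuous coordinate partial
derivatives (in the α variables) up to order two -/
def DualSmooth {G : Type} {M : ℕ} (f : (G → ℝ) × (G → Fin M → ℕ) → ℝ) : Prop :=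
  (∀ κ, Continuous fun α : G → ℝ => f (α, κ)) ∧
  (∀ ξ : G,
    (∀ p : (G → ℝ) × (G → Fin M → ℕ),
      DifferentiableAt ℝ (fun t : ℝ => f (p.1 + t • e1 ξ, p.2)) 0) ∧
    ∀ κ, Continuous fun α : G → ℝ => aderiv ξ f (α, κ)) ∧
  (∀ ξ₁ ξ₂ : G,
    (∀ p : (G → ℝ) × (G → Fin M → ℕ),
      DifferentiableAt ℝ (fun t : ℝ => aderiv ξ₁ f (p.1 + t • e1 ξ₂, p.2)) 0) ∧
    ∀ κ, Continuous fun α : G → ℝ => aderiv ξ₂ (aderiv ξ₁ f) (α, κ))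

/-- the domain D(Ω_{(α,κ)}) of the dual generator -/
def dualDom {G : Type} {M : ℕ} (a : G → G → ℝ) (γ K lam : ℝ) :
    Set ((G → ℝ) × (G → Fin M → ℕ) → ℝ) :=
  {f | Measurable f ∧ (∃ C, ∀ p, |f p| ≤ C) ∧ DualSmooth f ∧
    (∀ p : (G → ℝ) × (G → Fin M → ℕ), (∀ ξ, 0 ≤ p.1 ξ) →
      Summable (fun q : Fin M × G × G => |(p.2 q.2.1 q.1 : ℝ) * a q.2.2 q.2.1 *
        (f (p.1, fun η n => p.2 η n + ekap q.1 q.2.2 η n - ekap q.1 q.2.1 η n) - f p)|) ∧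
      Summable (fun q : Fin M × G => |((p.2 q.2 q.1 : ℝ) * ((p.2 q.2 q.1 : ℝ) - 1) / 2) *
        (f (p.1, fun η n => p.2 η n - ekap q.1 q.2 η n) - f p)|) ∧
      Summable (fun q : G × G => |a q.1 q.2 * (p.1 q.2 - p.1 q.1) * aderiv q.1 f p|) ∧
      Summable (fun ξ : G => |p.1 ξ * (K - p.1 ξ / 2) * aderiv ξ f p|) ∧
      Summable (fun ξ : G => |p.1 ξ * aderiv ξ (aderiv ξ f) p|) ∧
      Summable (fun ξ : G => |(kapbar p.2 ξ : ℝ) * aderiv ξ f p|)) ∧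
    ∃ C, ∀ p : (G → ℝ) × (G → Fin M → ℕ), (∀ ξ, 0 ≤ p.1 ξ) →
      |dualGen a γ K lam f p| ≤ C}

/-- the duality function H((α,κ),x) -/
noncomputable def Hdual {G : Type} {M : ℕ} (α : G → ℝ) (κ : G → Fin M → ℕ)
    (x : G → Fin M → ℝ) : ℝ :=
  Real.exp (-(∑' ξ : G, α ξ * xbar x ξ)) * ∏ᶠ ξ : G, ∏ m : Fin M, x ξ m ^ κ ξ m

/-- the function β(α,κ) appearing in the Feynman–Kac correction -/
noncomputable def betaDual {G : Type} {M : ℕ} (γ K : ℝ) (α : G → ℝ)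
    (κ : G → Fin M → ℕ) : ℝ :=
  γ * ∑' ξ : G, ((∑ m, (κ ξ m : ℝ) * ((κ ξ m : ℝ) - 1) / 2)
    - α ξ * (kapbar κ ξ : ℝ) + K * (kapbar κ ξ : ℝ))

/-- the exchangeable-case Feynman–Kac exponent at time s -/
noncomputable def dualFK {G : Type} {M : ℕ} (K : ℝ) (α : G → ℝ)
    (κ : G → Fin M → ℕ) : ℝ :=
  (∑' q : Fin M × G, (κ q.2 q.1 : ℝ) * ((κ q.2 q.1 : ℝ) - 1) / 2)
  + ∑' ξ : G, (K - α ξ) * (kapbar κ ξ : ℝ)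

namespace IsRWKernel

variable {G : Type} [AddCommGroup G] {a : G → G → ℝ}

theorem hasSum_row (ha : IsRWKernel a) (ξ : G) : HasSum (a ξ) 1 :=
  ((Equiv.subRight ξ).hasSum_iff.mpr ha.total).congr_fun fun η => by
    simp [ha.homog ξ η]

theorem hasSum_col (ha : IsRWKernel a) (ξ : G) : HasSum (fun η => a η ξ) 1 :=
  ((Equiv.subLeft ξ).hasSum_iff.mpr ha.total).congr_fun fun η => by
    simp [ha.homog η ξ]

theorem ahat_nonneg (ha : IsRWKernel a) (ξ η : G) : 0 ≤ ahat a ξ η :=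
  div_nonneg (add_nonneg (ha.nonneg ξ η) (ha.nonneg η ξ)) zero_le_two

theorem hasSum_ahat (ha : IsRWKernel a) (ξ : G) : HasSum (ahat a ξ) 1 := by
  have h := ((ha.hasSum_row ξ).add (ha.hasSum_col ξ)).div_const 2
  rwa [one_add_one_eq_two, div_self two_ne_zero] at h

end IsRWKernel

section Iterates

variable {G : Type} {p : G → G → ℝ}

theorem kiter_nonneg_hasSum (hp : ∀ ξ η, 0 ≤ p ξ η) (hrow : ∀ ξ, HasSum (p ξ) 1) (n : ℕ)
    (η : G) : (∀ ξ, 0 ≤ kiter p n η ξ) ∧ HasSum (kiter p n η) 1 := by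
  induction n with
  | zero =>
    refine ⟨fun ξ => by simp only [kiter]; positivity, ?_⟩
    simpa only [kiter, eq_comm] using hasSum_ite_eq η (1 : ℝ)
  | succ n ih =>
    obtain ⟨hnn, hsum⟩ := ih
    set f : G × G → ℝ := fun q => kiter p n η q.1 * p q.1 q.2
    have hf : 0 ≤ f := fun q => mul_nonneg (hnn _) (hp _ _)
    have hrow_f : ∀ ζ, HasSum (fun ξ => f (ζ, ξ)) (kiter p n η ζ) := fun ζ => by
      simpa using (hrow ζ).mul_left (kiter p n η ζ)
    have hf_sum : Summable f := (summable_prod_of_nonneg hf).mpr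
      ⟨fun ζ => (hrow_f ζ).summable, by simpa only [(hrow_f _).tsum_eq] using hsum.summable⟩
    have hf_one : HasSum f 1 := by
      rw [hf_sum.hasSum_iff, hf_sum.tsum_prod, ← hsum.tsum_eq]
      exact tsum_congr fun ζ => (hrow_f ζ).tsum_eq
    have hf_swap : HasSum (f ∘ Prod.swap) 1 := (Equiv.prodComm G G).hasSum_iff.mpr hf_one
    refine ⟨fun ξ => tsum_nonneg fun ζ => hf (ζ, ξ), hf_swap.prod_fiberwise fun ξ => ?_⟩
    exact (hf_swap.summable.prod_factor ξ).hasSum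

theorem kiter_le_one (hp : ∀ ξ η, 0 ≤ p ξ η) (hrow : ∀ ξ, HasSum (p ξ) 1) (n : ℕ)
    (η ξ : G) : kiter p n η ξ ≤ 1 :=
  le_hasSum (kiter_nonneg_hasSum hp hrow n η).2 ξ fun ζ _ => (kiter_nonneg_hasSum hp hrow n η).1 ζ

end Iterates

section LSweight

variable {G : Type} [AddCommGroup G] {a : G → G → ℝ} {R : ℝ} {β : G → ℝ}

theorem LSweight_term_nonneg (ha : IsRWKernel a) (hR : 2 < R) (hβ : ∀ η, 0 ≤ β η) (n : ℕ)
    (η ξ : G) : 0 ≤ ((R / 2) ^ n)⁻¹ * kiter (ahat a) n η ξ * β η := by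
  have hk := (kiter_nonneg_hasSum ha.ahat_nonneg ha.hasSum_ahat n η).1 ξ
  have hβη := hβ η
  have hR₂ : 0 < R / 2 := by linarith
  positivity

theorem LSweight_term_le (ha : IsRWKernel a) (hR : 2 < R) (hβ : ∀ η, 0 ≤ β η) (n : ℕ)
    (η ξ : G) : ((R / 2) ^ n)⁻¹ * kiter (ahat a) n η ξ * β η ≤ (2 / R) ^ n * β η := by
  rw [← inv_pow, inv_div]
  gcongr
  · exact hβ η
  · exact mul_le_of_le_one_right (by positivity) (kiter_le_one ha.ahat_nonneg ha.hasSum_ahat n η ξ)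

theorem summable_LSweight_term (ha : IsRWKernel a) (hR : 2 < R) (hβ : ∀ η, 0 ≤ β η) (η ξ : G) :
    Summable fun n : ℕ => ((R / 2) ^ n)⁻¹ * kiter (ahat a) n η ξ * β η :=
  .of_nonneg_of_le (LSweight_term_nonneg ha hR hβ · η ξ) (LSweight_term_le ha hR hβ · η ξ)
    ((summable_geometric_of_lt_one (by positivity) ((div_lt_one (by linarith)).mpr hR)).mul_right _)

theorem summable_LSweight_series (ha : IsRWKernel a) (hR : 2 < R) (hβ : ∀ η, 0 ≤ β η)
    (hβs : Summable β) (ξ : G) :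
    Summable fun η => ∑' n : ℕ, ((R / 2) ^ n)⁻¹ * kiter (ahat a) n η ξ * β η := by
  have hq : 2 / R < 1 := (div_lt_one (by linarith)).mpr hR
  refine .of_nonneg_of_le (fun η => tsum_nonneg (LSweight_term_nonneg ha hR hβ · η ξ))
    (fun η => ?_) (hβs.mul_left (1 - 2 / R)⁻¹)
  calc ∑' n : ℕ, ((R / 2) ^ n)⁻¹ * kiter (ahat a) n η ξ * β η
      ≤ ∑' n : ℕ, (2 / R) ^ n * β η :=
        (summable_LSweight_term ha hR hβ η ξ).tsum_le_tsum (LSweight_term_le ha hR hβ · η ξ)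
          ((summable_geometric_of_lt_one (by positivity) hq).mul_right _)
    _ = (1 - 2 / R)⁻¹ * β η := by rw [tsum_mul_right, tsum_geometric_of_lt_one (by positivity) hq]

theorem ahat_mul_le_LSweight (ha : IsRWKernel a) (hR : 2 < R) (hβ : ∀ η, 0 ≤ β η)
    (hβs : Summable β) (ξ η : G) : 2 / R * ahat a ξ η * β ξ ≤ LSweight a R β η := by
  have hkiter_one : kiter (ahat a) 1 ξ η = ahat a ξ η := by
    show ∑' ζ, kiter (ahat a) 0 ξ ζ * ahat a ζ η = _
    rw [tsum_eq_single ξ fun ζ hζ => by simp [kiter, Ne.symm hζ]]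
    simp [kiter]
  calc 2 / R * ahat a ξ η * β ξ
      = ((R / 2) ^ 1)⁻¹ * kiter (ahat a) 1 ξ η * β ξ := by rw [hkiter_one, pow_one, inv_div]
    _ ≤ ∑' n : ℕ, ((R / 2) ^ n)⁻¹ * kiter (ahat a) n ξ η * β ξ :=
        (summable_LSweight_term ha hR hβ ξ η).le_tsum 1
          fun n _ => LSweight_term_nonneg ha hR hβ n ξ η
    _ ≤ LSweight a R β η :=
        (summable_LSweight_series ha hR hβ hβs η).le_tsum ξ
          fun ζ _ => tsum_nonneg (LSweight_term_nonneg ha hR hβ · ζ η)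

theorem IsLSData.kernel_le_LSweight (hLS : IsLSData a R β) (η ξ : G) :
    a η ξ ≤ R / β ξ * LSweight a R β η := by
  obtain ⟨ha, hR, hβ, hβs⟩ := hLS
  have hahat : a η ξ ≤ 2 * ahat a ξ η := by rw [ahat]; linarith [ha.nonneg ξ η]
  rw [div_mul_eq_mul_div, le_div_iff₀ (hβ ξ)]
  calc a η ξ * β ξ ≤ 2 * ahat a ξ η * β ξ := by gcongr; exact (hβ ξ).le
    _ = R * (2 / R * ahat a ξ η * β ξ) := by field_simp
    _ ≤ R * LSweight a R β η := by
        gcongr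
        exact ahat_mul_le_LSweight ha hR (fun η => (hβ η).le) hβs ξ η

theorem IsLSData.summable_kernel_mul (hLS : IsLSData a R β) {f : G → ℝ} (hf : ∀ η, 0 ≤ f η)
    (hρf : Summable fun η => LSweight a R β η * f η) (ξ : G) : Summable fun η => a η ξ * f η :=
  .of_nonneg_of_le (fun η => mul_nonneg (hLS.1.nonneg η ξ) (hf η))
    (fun η => by
      simpa [mul_assoc] using mul_le_mul_of_nonneg_right (hLS.kernel_le_LSweight η ξ) (hf η))
    (hρf.mul_left (R / β ξ))

end LSweight

section StateSpace

variable {G : Type} {M : ℕ} {ρ : G → ℝ} {x : G → Fin M → ℝ}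

theorem xbar_nonneg (hx : x ∈ stateE ρ M) (ξ : G) : 0 ≤ xbar x ξ :=
  Finset.sum_nonneg fun m _ => hx.1 ξ m

theorem le_xbar (hx : x ∈ stateE ρ M) (ξ : G) (m : Fin M) : x ξ m ≤ xbar x ξ :=
  Finset.single_le_sum (fun n _ => hx.1 ξ n) (Finset.mem_univ m)

variable [AddCommGroup G] {a : G → G → ℝ} {R : ℝ} {β : G → ℝ}

theorem summable_kernel_mul_xbar (hLS : IsLSData a R β) (hx : x ∈ stateE (LSweight a R β) M)
    (ξ : G) : Summable fun η => a η ξ * xbar x η :=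
  hLS.summable_kernel_mul (xbar_nonneg hx) hx.2 ξ

theorem summable_kernel_mul_coord (hLS : IsLSData a R β) (hx : x ∈ stateE (LSweight a R β) M)
    (m : Fin M) (ξ : G) : Summable fun η => a η ξ * x η m :=
  (summable_kernel_mul_xbar hLS hx ξ).of_nonneg_of_le
    (fun η => mul_nonneg (hLS.1.nonneg η ξ) (hx.1 η m))
    (fun η => mul_le_mul_of_nonneg_left (le_xbar hx η m) (hLS.1.nonneg η ξ))

theorem summable_abs_kernel_mul_sub (hLS : IsLSData a R β) (hx : x ∈ stateE (LSweight a R β) M)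
    (m : Fin M) (ξ : G) : Summable fun η => |a η ξ * (x η m - x ξ m)| := by
  refine ((summable_kernel_mul_coord hLS hx m ξ).sub
    ((hLS.1.hasSum_col ξ).summable.mul_right (x ξ m))).abs.congr fun η => ?_
  rw [mul_sub]

theorem sum_tsum_kernel_mul_sub (hLS : IsLSData a R β) (hx : x ∈ stateE (LSweight a R β) M)
    (ξ : G) : ∑ m, ∑' η, a η ξ * (x η m - x ξ m) = ∑' η, a η ξ * xbar x η - xbar x ξ := by
  have hcol := hLS.1.hasSum_col ξ
  have h : ∀ m, ∑' η, a η ξ * (x η m - x ξ m) = ∑' η, a η ξ * x η m - x ξ m := fun m => by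
    simp_rw [mul_sub]
    rw [(summable_kernel_mul_coord hLS hx m ξ).tsum_sub (hcol.summable.mul_right _),
      tsum_mul_right, hcol.tsum_eq, one_mul]
  simp_rw [h, Finset.sum_sub_distrib, xbar, Finset.mul_sum]
  rw [← Summable.tsum_finsetSum fun m _ => summable_kernel_mul_coord hLS hx m ξ]

end StateSpace

section DualityFunction

variable {G : Type} {M : ℕ}

def dualMonomial (κ : G → Fin M → ℕ) (y : G → Fin M → ℝ) : ℝ :=
  ∏ᶠ ξ, ∏ m, y ξ m ^ κ ξ m

def eraseCoord (κ : G → Fin M → ℕ) (ξ : G) (m : Fin M) : G → Fin M → ℕ :=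
  fun η n => if η = ξ ∧ n = m then 0 else κ η n

variable {α : G → ℝ} {κ : G → Fin M → ℕ}

theorem Hdual_eq_exp_mul_dualMonomial (y : G → Fin M → ℝ) :
    Hdual α κ y = Real.exp (-∑' ξ, α ξ * xbar y ξ) * dualMonomial κ y :=
  rfl

theorem hasFiniteMulSupport_prod_pow (hκ : (Function.support κ).Finite)
    (y : G → Fin M → ℝ) : Function.HasFiniteMulSupport fun ξ => ∏ m, y ξ m ^ κ ξ m :=
  hκ.subset fun ξ hξ hκξ => hξ (by simp [show κ ξ = 0 from hκξ])

theorem dualMonomial_add {κ₁ κ₂ : G → Fin M → ℕ} (h₁ : (Function.support κ₁).Finite)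
    (h₂ : (Function.support κ₂).Finite) (y : G → Fin M → ℝ) :
    dualMonomial (κ₁ + κ₂) y = dualMonomial κ₁ y * dualMonomial κ₂ y := by
  simp only [dualMonomial, Pi.add_apply, pow_add, Finset.prod_mul_distrib]
  exact finprod_mul_distrib (hasFiniteMulSupport_prod_pow h₁ y) (hasFiniteMulSupport_prod_pow h₂ y)

theorem dualMonomial_eq_pow_mul_eraseCoord (hκ : (Function.support κ).Finite) (ξ : G) (m : Fin M)
    (y : G → Fin M → ℝ) :
    dualMonomial κ y = y ξ m ^ κ ξ m * dualMonomial (eraseCoord κ ξ m) y := by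
  set single : G → Fin M → ℕ := fun η n => if η = ξ ∧ n = m then κ ξ m else 0
  have hsplit : κ = single + eraseCoord κ ξ m := by
    funext η n
    by_cases h : η = ξ ∧ n = m
    · obtain ⟨rfl, rfl⟩ := h; simp [single, eraseCoord]
    · simp [single, eraseCoord, h]
  have hsingle : dualMonomial single y = y ξ m ^ κ ξ m := by
    rw [dualMonomial, finprod_eq_single _ ξ fun ζ hζ => by simp [single, hζ]]
    simp [single]
  have herase : (Function.support (eraseCoord κ ξ m)).Finite :=
    hκ.subset fun η hη hκη => hη (by funext n; simp [eraseCoord, show κ η = 0 from hκη])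
  rw [← hsingle, ← dualMonomial_add ((Set.finite_singleton ξ).subset ?_) herase, ← hsplit]
  intro η hη
  by_contra hne
  exact hη (by funext n; simp [single, show η ≠ ξ from hne])

theorem eraseCoord_add_ekap (ξ : G) (m : Fin M) :
    eraseCoord (fun η n => κ η n + ekap m ξ η n) ξ m = eraseCoord κ ξ m := by
  funext η n
  by_cases h : η = ξ ∧ n = m <;> simp [eraseCoord, ekap, h]

theorem eraseCoord_sub_ekap (ξ : G) (m : Fin M) :
    eraseCoord (fun η n => κ η n - ekap m ξ η n) ξ m = eraseCoord κ ξ m := by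
  funext η n
  by_cases h : η = ξ ∧ n = m <;> simp [eraseCoord, ekap, h]

theorem eraseCoord_add_smul_evec (ξ : G) (m : Fin M) (y : G → Fin M → ℝ) (t : ℝ) :
    dualMonomial (eraseCoord κ ξ m) (y + t • evec m ξ) = dualMonomial (eraseCoord κ ξ m) y := by
  refine finprod_congr fun η => Finset.prod_congr rfl fun n _ => ?_
  by_cases h : η = ξ ∧ n = m <;> simp [eraseCoord, evec, h]

theorem finite_support_add_ekap (hκ : (Function.support κ).Finite)
    (ξ : G) (m : Fin M) : (Function.support fun η n => κ η n + ekap m ξ η n).Finite := by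
  refine (hκ.union (Set.finite_singleton ξ)).subset fun η hη => ?_
  by_contra h
  simp only [Set.mem_union, Function.mem_support, ne_eq, not_not, Set.mem_singleton_iff,
    not_or] at h
  exact hη (by funext n; simp [h.1, ekap, h.2])

theorem finite_support_sub_ekap (hκ : (Function.support κ).Finite)
    (ξ : G) (m : Fin M) : (Function.support fun η n => κ η n - ekap m ξ η n).Finite :=
  hκ.subset fun η hη hκη => hη (by funext n; simp [show κ η = 0 from hκη])

theorem Hdual_add_ekap (hκ : (Function.support κ).Finite)
    (ξ : G) (m : Fin M) (y : G → Fin M → ℝ) :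
    Hdual α (fun η n => κ η n + ekap m ξ η n) y = y ξ m * Hdual α κ y := by
  simp only [Hdual_eq_exp_mul_dualMonomial,
    dualMonomial_eq_pow_mul_eraseCoord (finite_support_add_ekap hκ ξ m) ξ m,
    dualMonomial_eq_pow_mul_eraseCoord hκ ξ m, eraseCoord_add_ekap]
  simp [ekap, pow_succ]
  ring

theorem Hdual_eq_mul_Hdual_sub_ekap (hκ : (Function.support κ).Finite) {ξ : G} {m : Fin M}
    (hk : κ ξ m ≠ 0) (y : G → Fin M → ℝ) :
    Hdual α κ y = y ξ m * Hdual α (fun η n => κ η n - ekap m ξ η n) y := by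
  rw [← Hdual_add_ekap (finite_support_sub_ekap hκ ξ m)]
  congr
  funext η n
  by_cases h : η = ξ ∧ n = m
  · obtain ⟨rfl, rfl⟩ := h; simp [ekap]; omega
  · simp [ekap, h]

-- The factor `κ ξ m` covers `κ ξ m = 0`, where the truncated subtraction leaves `κ` unchanged.
theorem natCast_mul_mul_Hdual_sub_ekap (hκ : (Function.support κ).Finite) (m : Fin M) (ξ : G)
    (y : G → Fin M → ℝ) :
    (κ ξ m : ℝ) * (y ξ m * Hdual α (fun η n => κ η n - ekap m ξ η n) y) = κ ξ m * Hdual α κ y := by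
  rcases eq_or_ne (κ ξ m) 0 with hk | hk
  · simp [hk]
  · rw [← Hdual_eq_mul_Hdual_sub_ekap hκ hk]

theorem natCast_mul_Hdual_jump (hκ : (Function.support κ).Finite) (m : Fin M) (ξ η : G)
    (y : G → Fin M → ℝ) :
    (κ ξ m : ℝ) * (Hdual α (fun ζ n => κ ζ n + ekap m η ζ n - ekap m ξ ζ n) y - Hdual α κ y)
      = κ ξ m * ((y η m - y ξ m) * Hdual α (fun ζ n => κ ζ n - ekap m ξ ζ n) y) := by
  rcases eq_or_ne (κ ξ m) 0 with hk | hk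
  · simp [hk]
  have hjump : (fun ζ n => κ ζ n + ekap m η ζ n - ekap m ξ ζ n)
      = fun ζ n => (κ ζ n - ekap m ξ ζ n) + ekap m η ζ n := by
    funext ζ n
    by_cases h : ζ = ξ ∧ n = m
    · obtain ⟨rfl, rfl⟩ := h; simp only [ekap]; split_ifs <;> omega
    · simp [ekap, h]
  rw [hjump, Hdual_add_ekap (finite_support_sub_ekap hκ ξ m), Hdual_eq_mul_Hdual_sub_ekap hκ hk y]
  ring

theorem xbar_add_smul_evec (y : G → Fin M → ℝ) (t : ℝ) (m : Fin M) (ξ ζ : G) :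
    xbar (y + t • evec m ξ) ζ = xbar y ζ + if ζ = ξ then t else 0 := by
  by_cases h : ζ = ξ <;> simp [xbar, evec, h, Finset.sum_add_distrib]

theorem tsum_mul_xbar_add_smul_evec {y : G → Fin M → ℝ}
    (hα : Summable fun ζ => α ζ * xbar y ζ) (t : ℝ) (m : Fin M) (ξ : G) :
    ∑' ζ, α ζ * xbar (y + t • evec m ξ) ζ = ∑' ζ, α ζ * xbar y ζ + t * α ξ := by
  simp_rw [xbar_add_smul_evec, mul_add, mul_ite, mul_zero]
  rw [hα.tsum_add (summable_of_hasFiniteSupport ((Set.finite_singleton ξ).subset (by simp))),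
    tsum_ite_eq, mul_comm]

theorem tsum_add_smul_e1_mul_xbar {y : G → Fin M → ℝ}
    (hα : Summable fun ζ => α ζ * xbar y ζ) (t : ℝ) (ξ : G) :
    ∑' ζ, (α + t • e1 ξ) ζ * xbar y ζ = ∑' ζ, α ζ * xbar y ζ + t * xbar y ξ := by
  simp_rw [Pi.add_apply, Pi.smul_apply, e1, smul_eq_mul, mul_ite, mul_one, mul_zero, add_mul,
    ite_mul, zero_mul]
  rw [hα.tsum_add (summable_of_hasFiniteSupport ((Set.finite_singleton ξ).subset (by simp))),
    tsum_ite_eq]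

theorem summable_mul_xbar (hα : (Function.support α).Finite) (y : G → Fin M → ℝ) :
    Summable fun ζ => α ζ * xbar y ζ :=
  summable_of_hasFiniteSupport (hα.subset (Function.support_mul_subset_left _ _))

theorem hasDerivAt_Hdual_add_smul_evec (hα : (Function.support α).Finite)
    (hκ : (Function.support κ).Finite) (m : Fin M) (ξ : G) (y : G → Fin M → ℝ) :
    HasDerivAt (fun t : ℝ => Hdual α κ (y + t • evec m ξ))
      (-α ξ * Hdual α κ y + κ ξ m * Hdual α (fun η n => κ η n - ekap m ξ η n) y) 0 := by
  set L := ∑' ζ, α ζ * xbar y ζ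
  set C := dualMonomial (eraseCoord κ ξ m) y
  have hfun : (fun t : ℝ => Hdual α κ (y + t • evec m ξ))
      = fun t => Real.exp (-(L + t * α ξ)) * ((y ξ m + t) ^ κ ξ m * C) := by
    funext t
    rw [Hdual_eq_exp_mul_dualMonomial, tsum_mul_xbar_add_smul_evec (summable_mul_xbar hα y),
      dualMonomial_eq_pow_mul_eraseCoord hκ ξ m, eraseCoord_add_smul_evec]
    simp [evec, L, C]
  have hexp : HasDerivAt (fun t : ℝ => Real.exp (-(L + t * α ξ))) (Real.exp (-L) * -α ξ) 0 := by
    simpa using (((hasDerivAt_id (0 : ℝ)).mul_const (α ξ)).const_add L).fun_neg.exp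
  have hpow : HasDerivAt (fun t : ℝ => (y ξ m + t) ^ κ ξ m * C)
      (κ ξ m * y ξ m ^ (κ ξ m - 1) * C) 0 := by
    simpa using (((hasDerivAt_id (0 : ℝ)).const_add (y ξ m)).fun_pow (κ ξ m)).mul_const C
  rw [hfun]
  refine (hexp.fun_mul hpow).congr_deriv ?_
  rw [Hdual_eq_exp_mul_dualMonomial, Hdual_eq_exp_mul_dualMonomial,
    dualMonomial_eq_pow_mul_eraseCoord hκ ξ m,
    dualMonomial_eq_pow_mul_eraseCoord (finite_support_sub_ekap hκ ξ m) ξ m,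
    eraseCoord_sub_ekap]
  simp [ekap]
  ring

theorem pderiv_Hdual (hα : (Function.support α).Finite) (hκ : (Function.support κ).Finite)
    (m : Fin M) (ξ : G) (y : G → Fin M → ℝ) :
    pderiv m ξ (fun z => Hdual α κ z) y
      = -α ξ * Hdual α κ y + κ ξ m * Hdual α (fun η n => κ η n - ekap m ξ η n) y :=
  (hasDerivAt_Hdual_add_smul_evec hα hκ m ξ y).deriv

theorem pderiv_pderiv_Hdual (hα : (Function.support α).Finite) (hκ : (Function.support κ).Finite)
    (m : Fin M) (ξ : G) (y : G → Fin M → ℝ) :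
    pderiv m ξ (pderiv m ξ fun z => Hdual α κ z) y
      = α ξ ^ 2 * Hdual α κ y
        - 2 * α ξ * κ ξ m * Hdual α (fun η n => κ η n - ekap m ξ η n) y
        + κ ξ m * (κ ξ m - 1 : ℕ) *
          Hdual α (fun η n => κ η n - ekap m ξ η n - ekap m ξ η n) y := by
  have hκ' := finite_support_sub_ekap hκ ξ m
  have hderiv := ((hasDerivAt_Hdual_add_smul_evec hα hκ m ξ y).const_mul (-α ξ)).fun_add
    ((hasDerivAt_Hdual_add_smul_evec hα hκ' m ξ y).const_mul (κ ξ m : ℝ))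
  rw [pderiv, funext (pderiv_Hdual hα hκ m ξ), hderiv.deriv]
  simp only [ekap, and_self, if_true]
  ring

theorem hasDerivAt_Hdual_add_smul_e1 (hα : (Function.support α).Finite) (ξ : G)
    (y : G → Fin M → ℝ) :
    HasDerivAt (fun t : ℝ => Hdual (α + t • e1 ξ) κ y) (-xbar y ξ * Hdual α κ y) 0 := by
  have hfun : (fun t : ℝ => Hdual (α + t • e1 ξ) κ y)
      = fun t => Real.exp (-(∑' ζ, α ζ * xbar y ζ + t * xbar y ξ)) * dualMonomial κ y := by
    funext t
    rw [Hdual_eq_exp_mul_dualMonomial, tsum_add_smul_e1_mul_xbar (summable_mul_xbar hα y)]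
  have hexp := ((((hasDerivAt_id (0 : ℝ)).mul_const (xbar y ξ)).const_add
    (∑' ζ, α ζ * xbar y ζ)).fun_neg.exp).mul_const (dualMonomial κ y)
  rw [hfun]
  refine hexp.congr_deriv ?_
  simp [Hdual_eq_exp_mul_dualMonomial]
  ring

theorem aderiv_Hdual (hα : (Function.support α).Finite) (ξ : G) (y : G → Fin M → ℝ) :
    aderiv ξ (fun p => Hdual p.1 p.2 y) (α, κ) = -xbar y ξ * Hdual α κ y :=
  (hasDerivAt_Hdual_add_smul_e1 hα ξ y).deriv

theorem aderiv_aderiv_Hdual (hα : (Function.support α).Finite) (ξ : G) (y : G → Fin M → ℝ) :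
    aderiv ξ (aderiv ξ fun p => Hdual p.1 p.2 y) (α, κ) = xbar y ξ ^ 2 * Hdual α κ y := by
  have hα' : ∀ t : ℝ, (Function.support (α + t • e1 ξ)).Finite := fun t =>
    (hα.union ((Set.finite_singleton ξ).subset fun η hη => by by_contra h; simp_all [e1])).subset
      ((Function.support_add _ _).trans (Set.union_subset_union_right _
        (Function.support_smul_subset_right _ _)))
  have hfun : (fun t : ℝ => aderiv ξ (fun p => Hdual p.1 p.2 y) (α + t • e1 ξ, κ))
      = fun t => -xbar y ξ * Hdual (α + t • e1 ξ) κ y :=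
    funext fun t => aderiv_Hdual (hα' t) ξ y
  rw [aderiv, hfun, ((hasDerivAt_Hdual_add_smul_e1 hα ξ y).const_mul (-xbar y ξ)).deriv]
  ring

-- The coefficient of `Hdual α κ y` in the last line is the site-`ξ` summand of `betaDual`.
theorem sum_site_generator_Hdual (hα : (Function.support α).Finite)
    (hκ : (Function.support κ).Finite) (ξ : G) (y : G → Fin M → ℝ) (D : Fin M → ℝ)
    (γ K lam : ℝ) :
    ∑ m, ((D m + γ * y ξ m * (K - lam * xbar y ξ)) * pderiv m ξ (fun z => Hdual α κ z) y
        + 1 / 2 * (γ * y ξ m * pderiv m ξ (pderiv m ξ fun z => Hdual α κ z) y))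
      = ∑ m, ((κ ξ m : ℝ) * (D m * Hdual α (fun η n => κ η n - ekap m ξ η n) y)
            + γ * ((κ ξ m : ℝ) * ((κ ξ m : ℝ) - 1) / 2 *
              (Hdual α (fun η n => κ η n - ekap m ξ η n) y - Hdual α κ y)))
          - α ξ * (∑ m, D m) * Hdual α κ y
          + γ * (α ξ * (K - α ξ / 2) * (-xbar y ξ * Hdual α κ y))
          + γ * lam * (α ξ * (xbar y ξ ^ 2 * Hdual α κ y))
          + γ * lam * (kapbar κ ξ * (-xbar y ξ * Hdual α κ y))
          + γ * ((∑ m, (κ ξ m : ℝ) * ((κ ξ m : ℝ) - 1) / 2)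
              - α ξ * kapbar κ ξ + K * kapbar κ ξ) * Hdual α κ y := by
  set H := Hdual α κ y
  set H₁ : Fin M → ℝ := fun m => Hdual α (fun η n => κ η n - ekap m ξ η n) y
  set X := xbar y ξ
  have h₁ : ∀ m, (κ ξ m : ℝ) * (y ξ m * H₁ m) = κ ξ m * H := fun m =>
    natCast_mul_mul_Hdual_sub_ekap hκ m ξ y
  have h₂ : ∀ m, (κ ξ m : ℝ) * (κ ξ m - 1 : ℕ) *
      (y ξ m * Hdual α (fun η n => κ η n - ekap m ξ η n - ekap m ξ η n) y)
      = κ ξ m * (κ ξ m - 1) * H₁ m := by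
    intro m
    have h := natCast_mul_mul_Hdual_sub_ekap (α := α) (finite_support_sub_ekap hκ ξ m) m ξ y
    have he : ekap m ξ ξ m = 1 := by simp [ekap]
    beta_reduce at h
    rw [he] at h
    rcases Nat.eq_zero_or_pos (κ ξ m) with hk | hk
    · simp [hk]
    · rw [mul_assoc, h, Nat.cast_sub hk, Nat.cast_one, mul_assoc]
  have hL : ∑ m, ((D m + γ * y ξ m * (K - lam * X)) * pderiv m ξ (fun z => Hdual α κ z) y
        + 1 / 2 * (γ * y ξ m * pderiv m ξ (pderiv m ξ fun z => Hdual α κ z) y))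
      = (∑ m, D m) * (-α ξ * H) + ∑ m, (κ ξ m : ℝ) * (D m * H₁ m)
        + (∑ m, y ξ m) * (γ * (K - lam * X) * (-α ξ * H) + γ / 2 * α ξ ^ 2 * H)
        + (∑ m, (κ ξ m : ℝ)) * (γ * (K - lam * X) * H - γ * α ξ * H)
        + (∑ m, (κ ξ m : ℝ) * (κ ξ m - 1) * H₁ m) * (γ / 2) := by
    simp only [pderiv_Hdual hα hκ, pderiv_pderiv_Hdual hα hκ, Finset.sum_mul,
      ← Finset.sum_add_distrib]
    refine Finset.sum_congr rfl fun m _ => ?_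
    linear_combination (γ * (K - lam * X) - γ * α ξ) * h₁ m + γ / 2 * h₂ m
  have hR : ∑ m, ((κ ξ m : ℝ) * (D m * H₁ m) + γ * ((κ ξ m : ℝ) * ((κ ξ m : ℝ) - 1) / 2 *
        (H₁ m - H)))
      = ∑ m, (κ ξ m : ℝ) * (D m * H₁ m) + (∑ m, (κ ξ m : ℝ) * (κ ξ m - 1) * H₁ m) * (γ / 2)
        + (∑ m, (κ ξ m : ℝ) * ((κ ξ m : ℝ) - 1) / 2) * (-γ * H) := by
    simp only [Finset.sum_mul, ← Finset.sum_add_distrib]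
    exact Finset.sum_congr rfl fun m _ => by ring
  rw [hL, hR, show ∑ m, y ξ m = X from rfl, show ∑ m, (κ ξ m : ℝ) = kapbar κ ξ by simp [kapbar]]
  ring

end DualityFunction

section ProductSums

variable {ι ι' : Type*} {f : ι × ι' → ℝ}

theorem summable_prod_of_nonneg_of_fst_notMem (hf : 0 ≤ f) (s : Finset ι)
    (h0 : ∀ i ∉ s, ∀ j, f (i, j) = 0) (hs : ∀ i, Summable fun j => f (i, j)) : Summable f :=
  (summable_prod_of_nonneg hf).mpr
    ⟨hs, summable_of_ne_finset_zero (s := s) fun i hi => by simp [h0 i hi]⟩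

theorem tsum_prod_eq_sum_of_fst_notMem (hf : Summable f) (s : Finset ι)
    (h0 : ∀ i ∉ s, ∀ j, f (i, j) = 0) : ∑' q, f q = ∑ i ∈ s, ∑' j, f (i, j) := by
  rw [hf.tsum_prod' hf.prod_factor]
  exact tsum_eq_sum fun i hi => by simp [h0 i hi]

theorem tsum_prod_eq_sum_of_snd_notMem (hf : Summable f) (s : Finset ι')
    (h0 : ∀ i, ∀ j ∉ s, f (i, j) = 0) : ∑' q, f q = ∑ j ∈ s, ∑' i, f (i, j) := by
  rw [← (Equiv.prodComm ι' ι).tsum_eq]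
  exact tsum_prod_eq_sum_of_fst_notMem hf.prod_symm s fun j hj i => h0 i j hj

theorem tsum_fintype_prod_eq_sum [Fintype ι] (s : Finset ι') (h0 : ∀ i, ∀ j ∉ s, f (i, j) = 0) :
    ∑' q, f q = ∑ j ∈ s, ∑ i, f (i, j) := by
  rw [tsum_eq_sum (s := Finset.univ ×ˢ s) fun q hq => h0 q.1 q.2 (by simpa using hq),
    Finset.sum_product_right]

theorem summable_fintype_prod [Finite ι] (s : Finset ι') (h0 : ∀ i, ∀ j ∉ s, f (i, j) = 0) :
    Summable f := by
  have := Fintype.ofFinite ι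
  exact summable_of_ne_finset_zero (s := Finset.univ ×ˢ s)
    fun q hq => h0 q.1 q.2 (by simpa using hq)

theorem finite_support_of_eq_zero_off {ι N : Type*} [Zero N] {f : ι → N} (s : Finset ι)
    (h : ∀ i ∉ s, f i = 0) : (Function.support f).Finite :=
  s.finite_toSet.subset (Function.support_subset_iff'.mpr h)

end ProductSums

section GeneratorIdentity

variable {G : Type} {M : ℕ} {x : G → Fin M → ℝ} {α : G → ℝ} {κ : G → Fin M → ℕ} {F : Finset G}

theorem diffGen_Hdual_eq_sum (hα : ∀ ξ ∉ F, α ξ = 0) (hκ : ∀ ξ ∉ F, κ ξ = 0) (γ K lam : ℝ) :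
    diffGen a (fun _ => γ) (fun _ => K) (fun _ _ => lam) (fun y => Hdual α κ y) x
      = ∑ ξ ∈ F, ∑ m, (((∑' η, a η ξ * (x η m - x ξ m)) + γ * x ξ m * (K - lam * xbar x ξ))
          * pderiv m ξ (fun y => Hdual α κ y) x
          + 1 / 2 * (γ * x ξ m * pderiv m ξ (pderiv m ξ fun y => Hdual α κ y) x)) := by
  have hαfin := finite_support_of_eq_zero_off F hα
  have hκfin := finite_support_of_eq_zero_off F hκ
  rw [diffGen,
    tsum_fintype_prod_eq_sum F fun m ξ hξ => by
      simp [pderiv_Hdual hαfin hκfin, hα ξ hξ, hκ ξ hξ],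
    tsum_fintype_prod_eq_sum F fun m ξ hξ => by
      simp [pderiv_pderiv_Hdual hαfin hκfin, hα ξ hξ, hκ ξ hξ]]
  simp only [Finset.mul_sum, ← Finset.sum_add_distrib, xbar]

theorem betaDual_eq_sum (hα : ∀ ξ ∉ F, α ξ = 0) (hκ : ∀ ξ ∉ F, κ ξ = 0) (γ K : ℝ) :
    betaDual γ K α κ = γ * ∑ ξ ∈ F, ((∑ m, (κ ξ m : ℝ) * ((κ ξ m : ℝ) - 1) / 2)
      - α ξ * kapbar κ ξ + K * kapbar κ ξ) := by
  rw [betaDual, tsum_eq_sum fun ξ hξ => by simp [kapbar, hα ξ hξ, hκ ξ hξ]]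

variable [AddCommGroup G] {a : G → G → ℝ} {R : ℝ} {β : G → ℝ}

theorem summable_abs_natCast_mul_kernel_mul_Hdual_jump (hLS : IsLSData a R β)
    (hx : x ∈ stateE (LSweight a R β) M) (hκ : (Function.support κ).Finite) :
    Summable fun q : Fin M × G × G => |(κ q.2.1 q.1 : ℝ) * a q.2.2 q.2.1 *
      (Hdual α (fun η n => κ η n + ekap q.1 q.2.2 η n - ekap q.1 q.2.1 η n) x - Hdual α κ x)| := by
  have hterm : ∀ (m : Fin M) (ξ η : G), |(κ ξ m : ℝ) * a η ξ *
      (Hdual α (fun ζ n => κ ζ n + ekap m η ζ n - ekap m ξ ζ n) x - Hdual α κ x)|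
      = κ ξ m * |Hdual α (fun ζ n => κ ζ n - ekap m ξ ζ n) x| * |a η ξ * (x η m - x ξ m)| := by
    intro m ξ η
    rw [mul_right_comm, natCast_mul_Hdual_jump hκ, abs_mul, abs_mul, abs_mul, abs_mul,
      Nat.abs_cast]
    ring
  refine summable_prod_of_nonneg_of_fst_notMem (fun _ => abs_nonneg _) Finset.univ (by simp)
    fun m => summable_prod_of_nonneg_of_fst_notMem (fun _ => abs_nonneg _) hκ.toFinset ?_ ?_
  · intro ξ hξ η
    simp [show κ ξ = 0 by simpa using hξ]
  · intro ξ
    simp_rw [hterm]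
    exact (summable_abs_kernel_mul_sub hLS hx m ξ).mul_left _

theorem summable_alpha_mul_kernel_mul_xbar (hLS : IsLSData a R β)
    (hx : x ∈ stateE (LSweight a R β) M) (hα : ∀ ξ ∉ F, α ξ = 0) :
    Summable fun q : G × G => α q.2 * (a q.1 q.2 * xbar x q.1) := by
  refine .of_abs (Summable.prod_symm (f := fun q : G × G => |α q.1 * (a q.2 q.1 * xbar x q.2)|) ?_)
  refine summable_prod_of_nonneg_of_fst_notMem (fun _ => abs_nonneg _) F (by simp_all) fun η => ?_
  simpa [abs_mul, abs_of_nonneg (hLS.1.nonneg _ _), abs_of_nonneg (xbar_nonneg hx _)]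
    using (summable_kernel_mul_xbar hLS hx η).mul_left |α η|

theorem summable_alpha_mul_xbar_mul_kernel (hLS : IsLSData a R β) (hα : ∀ ξ ∉ F, α ξ = 0) :
    Summable fun q : G × G => α q.1 * xbar x q.1 * a q.1 q.2 := by
  refine Summable.of_abs ?_
  refine summable_prod_of_nonneg_of_fst_notMem (fun _ => abs_nonneg _) F (by simp_all) fun ξ => ?_
  simpa [abs_mul, abs_of_nonneg (hLS.1.nonneg _ _)]
    using (hLS.1.hasSum_row ξ).summable.mul_left |α ξ * xbar x ξ|

theorem summable_abs_kernel_mul_sub_mul_xbar (hLS : IsLSData a R β)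
    (hx : x ∈ stateE (LSweight a R β) M) (hα : ∀ ξ ∉ F, α ξ = 0) :
    Summable fun q : G × G => |a q.1 q.2 * (α q.2 - α q.1) * xbar x q.1| :=
  ((summable_alpha_mul_kernel_mul_xbar hLS hx hα).sub
    (summable_alpha_mul_xbar_mul_kernel hLS hα)).abs.congr fun q => by ring_nf

-- Moving the weights `α` with the kernel `a` is adjoint to moving the masses `x̄` with `ā`.
theorem tsum_kernel_mul_sub_mul_xbar (hLS : IsLSData a R β)
    (hx : x ∈ stateE (LSweight a R β) M) (hα : ∀ ξ ∉ F, α ξ = 0) :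
    ∑' q : G × G, a q.1 q.2 * (α q.2 - α q.1) * xbar x q.1
      = ∑ ξ ∈ F, α ξ * (∑' η, a η ξ * xbar x η - xbar x ξ) := by
  have h1 := summable_alpha_mul_kernel_mul_xbar hLS hx hα
  have h2 := summable_alpha_mul_xbar_mul_kernel (x := x) hLS hα
  have hsplit : (fun q : G × G => a q.1 q.2 * (α q.2 - α q.1) * xbar x q.1)
      = fun q => α q.2 * (a q.1 q.2 * xbar x q.1) - α q.1 * xbar x q.1 * a q.1 q.2 :=
    funext fun q => by ring
  rw [hsplit, h1.tsum_sub h2, tsum_prod_eq_sum_of_snd_notMem h1 F (by simp_all),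
    tsum_prod_eq_sum_of_fst_notMem h2 F (by simp_all), ← Finset.sum_sub_distrib]
  refine Finset.sum_congr rfl fun ξ _ => ?_
  simp only [tsum_mul_left, (hLS.1.hasSum_row ξ).tsum_eq]
  ring

theorem tsum_dual_jump_eq_sum (hLS : IsLSData a R β) (hx : x ∈ stateE (LSweight a R β) M)
    (hκ : ∀ ξ ∉ F, κ ξ = 0) :
    ∑' q : Fin M × G × G, (κ q.2.1 q.1 : ℝ) * a q.2.2 q.2.1 *
      (Hdual α (fun η n => κ η n + ekap q.1 q.2.2 η n - ekap q.1 q.2.1 η n) x - Hdual α κ x)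
      = ∑ ξ ∈ F, ∑ m, (κ ξ m : ℝ) * ((∑' η, a η ξ * (x η m - x ξ m)) *
          Hdual α (fun η n => κ η n - ekap m ξ η n) x) := by
  have hκfin := finite_support_of_eq_zero_off F hκ
  have hs := (summable_abs_natCast_mul_kernel_mul_Hdual_jump (α := α) hLS hx hκfin).of_abs
  rw [tsum_prod_eq_sum_of_fst_notMem hs Finset.univ (by simp), Finset.sum_congr rfl fun m _ =>
    tsum_prod_eq_sum_of_fst_notMem (hs.prod_factor m) F (by simp_all), Finset.sum_comm]
  refine Finset.sum_congr rfl fun ξ _ => Finset.sum_congr rfl fun m _ => ?_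
  simp only [mul_right_comm _ (a _ ξ), natCast_mul_Hdual_jump hκfin]
  rw [← tsum_mul_right, ← tsum_mul_left]
  congr 1
  funext η
  ring

theorem tsum_kernel_mul_sub_mul_aderiv_Hdual (hLS : IsLSData a R β)
    (hx : x ∈ stateE (LSweight a R β) M) (hα : ∀ ξ ∉ F, α ξ = 0) :
    ∑' q : G × G, a q.1 q.2 * (α q.2 - α q.1) * aderiv q.1 (fun p => Hdual p.1 p.2 x) (α, κ)
      = -(∑ ξ ∈ F, α ξ * ∑ m, ∑' η, a η ξ * (x η m - x ξ m)) * Hdual α κ x := by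
  simp only [aderiv_Hdual (finite_support_of_eq_zero_off F hα), sum_tsum_kernel_mul_sub hLS hx,
    ← tsum_kernel_mul_sub_mul_xbar hLS hx hα, ← tsum_mul_right, ← tsum_neg]
  congr 1
  funext q
  ring

theorem dualGen_Hdual_eq_sum (hLS : IsLSData a R β) (hx : x ∈ stateE (LSweight a R β) M)
    (hα : ∀ ξ ∉ F, α ξ = 0) (hκ : ∀ ξ ∉ F, κ ξ = 0) (γ K lam : ℝ) :
    dualGen a γ K lam (fun p => Hdual p.1 p.2 x) (α, κ)
      = ∑ ξ ∈ F, (∑ m, ((κ ξ m : ℝ) * ((∑' η, a η ξ * (x η m - x ξ m)) *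
              Hdual α (fun η n => κ η n - ekap m ξ η n) x)
            + γ * ((κ ξ m : ℝ) * ((κ ξ m : ℝ) - 1) / 2 *
              (Hdual α (fun η n => κ η n - ekap m ξ η n) x - Hdual α κ x)))
          - α ξ * (∑ m, ∑' η, a η ξ * (x η m - x ξ m)) * Hdual α κ x
          + γ * (α ξ * (K - α ξ / 2) * (-xbar x ξ * Hdual α κ x))
          + γ * lam * (α ξ * (xbar x ξ ^ 2 * Hdual α κ x))
          + γ * lam * (kapbar κ ξ * (-xbar x ξ * Hdual α κ x))) := by
  have hαfin := finite_support_of_eq_zero_off F hα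
  rw [dualGen, tsum_dual_jump_eq_sum hLS hx hκ, tsum_kernel_mul_sub_mul_aderiv_Hdual hLS hx hα,
    tsum_fintype_prod_eq_sum F fun m ξ hξ => by simp [hκ ξ hξ],
    tsum_eq_sum (s := F) fun ξ hξ => by simp [hα ξ hξ],
    tsum_eq_sum (s := F) fun ξ hξ => by simp [hα ξ hξ],
    tsum_eq_sum (s := F) fun ξ hξ => by simp [kapbar, hκ ξ hξ]]
  simp only [aderiv_Hdual hαfin, aderiv_aderiv_Hdual hαfin, Finset.mul_sum F, Finset.sum_mul F,
    ← Finset.sum_neg_distrib, ← Finset.sum_add_distrib]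
  refine Finset.sum_congr rfl fun ξ _ => ?_
  rw [Finset.sum_add_distrib, ← Finset.mul_sum]
  ring

end GeneratorIdentity

theorem duality_generator_identity_general
    {G : Type} [AddCommGroup G]
    (a : G → G → ℝ) (R : ℝ) (β : G → ℝ) (hLS : IsLSData a R β)
    (M : ℕ) (γ K lam : ℝ)
    (x : G → Fin M → ℝ) (hx : x ∈ stateE (LSweight a R β) M)
    (α : G → ℝ) (hαfin : (Function.support α).Finite)
    (κ : G → Fin M → ℕ) (hκfin : (Function.support κ).Finite) :
    -- all series converge absolutely:
    (∀ (m : Fin M) (ξ : G), Summable (fun η : G => |a η ξ * (x η m - x ξ m)|)) ∧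
    Summable (fun q : Fin M × G =>
      |((∑' η : G, a η q.2 * (x η q.1 - x q.2 q.1))
        + γ * x q.2 q.1 * (K - ∑ n, lam * x q.2 n))
        * pderiv q.1 q.2 (fun y => Hdual α κ y) x|) ∧
    Summable (fun q : Fin M × G =>
      |γ * x q.2 q.1 *
        pderiv q.1 q.2 (pderiv q.1 q.2 fun y => Hdual α κ y) x|) ∧
    Summable (fun q : Fin M × G × G => |(κ q.2.1 q.1 : ℝ) * a q.2.2 q.2.1 *
      (Hdual α (fun η n => κ η n + ekap q.1 q.2.2 η n - ekap q.1 q.2.1 η n) x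
        - Hdual α κ x)|) ∧
    Summable (fun q : Fin M × G => |((κ q.2 q.1 : ℝ) * ((κ q.2 q.1 : ℝ) - 1) / 2) *
      (Hdual α (fun η n => κ η n - ekap q.1 q.2 η n) x - Hdual α κ x)|) ∧
    Summable (fun q : G × G => |a q.1 q.2 * (α q.2 - α q.1) *
      aderiv q.1 (fun p => Hdual p.1 p.2 x) (α, κ)|) ∧
    Summable (fun ξ : G => |α ξ * (K - α ξ / 2) *
      aderiv ξ (fun p => Hdual p.1 p.2 x) (α, κ)|) ∧
    Summable (fun ξ : G => |α ξ *
      aderiv ξ (aderiv ξ fun p => Hdual p.1 p.2 x) (α, κ)|) ∧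
    Summable (fun ξ : G => |(kapbar κ ξ : ℝ) *
      aderiv ξ (fun p => Hdual p.1 p.2 x) (α, κ)|) ∧
    Summable (fun ξ : G => |(∑ m, (κ ξ m : ℝ) * ((κ ξ m : ℝ) - 1) / 2)
      - α ξ * (kapbar κ ξ : ℝ) + K * (kapbar κ ξ : ℝ)|) ∧
    -- and the generator identity holds:
    diffGen a (fun _ => γ) (fun _ => K) (fun _ _ => lam)
        (fun y => Hdual α κ y) x
      = dualGen a γ K lam (fun p => Hdual p.1 p.2 x) (α, κ)
        + betaDual γ K α κ * Hdual α κ x := by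
  set F := hαfin.toFinset ∪ hκfin.toFinset
  have hα : ∀ ξ ∉ F, α ξ = 0 := fun ξ hξ => by_contra fun h => hξ (by simp [F, h])
  have hκ : ∀ ξ ∉ F, κ ξ = 0 := fun ξ hξ => by_contra fun h => hξ (by simp [F, h])
  refine ⟨summable_abs_kernel_mul_sub hLS hx,
    summable_fintype_prod F fun m ξ hξ => by simp [pderiv_Hdual hαfin hκfin, hα ξ hξ, hκ ξ hξ],
    summable_fintype_prod F fun m ξ hξ => by
      simp [pderiv_pderiv_Hdual hαfin hκfin, hα ξ hξ, hκ ξ hξ],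
    summable_abs_natCast_mul_kernel_mul_Hdual_jump hLS hx hκfin,
    summable_fintype_prod F fun m ξ hξ => by simp [hκ ξ hξ],
    ((summable_abs_kernel_mul_sub_mul_xbar hLS hx hα).mul_right |Hdual α κ x|).congr fun q => by
      rw [aderiv_Hdual hαfin, ← abs_mul, neg_mul, mul_neg, abs_neg, mul_assoc],
    summable_of_ne_finset_zero (s := F) fun ξ hξ => by simp [hα ξ hξ],
    summable_of_ne_finset_zero (s := F) fun ξ hξ => by simp [hα ξ hξ],
    summable_of_ne_finset_zero (s := F) fun ξ hξ => by simp [kapbar, hκ ξ hξ],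
    summable_of_ne_finset_zero (s := F) fun ξ hξ => by simp [kapbar, hα ξ hξ, hκ ξ hξ], ?_⟩
  rw [diffGen_Hdual_eq_sum hα hκ, dualGen_Hdual_eq_sum hLS hx hα hκ, betaDual_eq_sum hα hκ,
    Finset.mul_sum, Finset.sum_mul, ← Finset.sum_add_distrib]
  exact Finset.sum_congr rfl fun ξ _ =>
    sum_site_generator_Hdual hαfin hκfin ξ x (fun m => ∑' η, a η ξ * (x η m - x ξ m)) γ K lam

theorem duality_generator_identity
    {G : Type} [AddCommGroup G] [Countable G]
    (a : G → G → ℝ) (R : ℝ) (β : G → ℝ) (hLS : IsLSData a R β)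
    (M : ℕ) (γ K lam : ℝ) (hγ : 0 < γ) (hK : 0 < K) (hlam : 0 < lam)
    (x : G → Fin M → ℝ) (hx : x ∈ stateE (LSweight a R β) M)
    (α : G → ℝ) (hαfin : (Function.support α).Finite) (hαpos : ∀ ξ, 0 ≤ α ξ)
    (κ : G → Fin M → ℕ) (hκfin : (Function.support κ).Finite) :
    -- all series converge absolutely:
    (∀ (m : Fin M) (ξ : G), Summable (fun η : G => |a η ξ * (x η m - x ξ m)|)) ∧
    Summable (fun q : Fin M × G =>
      |((∑' η : G, a η q.2 * (x η q.1 - x q.2 q.1))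
        + γ * x q.2 q.1 * (K - ∑ n, lam * x q.2 n))
        * pderiv q.1 q.2 (fun y => Hdual α κ y) x|) ∧
    Summable (fun q : Fin M × G =>
      |γ * x q.2 q.1 *
        pderiv q.1 q.2 (pderiv q.1 q.2 fun y => Hdual α κ y) x|) ∧
    Summable (fun q : Fin M × G × G => |(κ q.2.1 q.1 : ℝ) * a q.2.2 q.2.1 *
      (Hdual α (fun η n => κ η n + ekap q.1 q.2.2 η n - ekap q.1 q.2.1 η n) x
        - Hdual α κ x)|) ∧
    Summable (fun q : Fin M × G => |((κ q.2 q.1 : ℝ) * ((κ q.2 q.1 : ℝ) - 1) / 2) *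
      (Hdual α (fun η n => κ η n - ekap q.1 q.2 η n) x - Hdual α κ x)|) ∧
    Summable (fun q : G × G => |a q.1 q.2 * (α q.2 - α q.1) *
      aderiv q.1 (fun p => Hdual p.1 p.2 x) (α, κ)|) ∧
    Summable (fun ξ : G => |α ξ * (K - α ξ / 2) *
      aderiv ξ (fun p => Hdual p.1 p.2 x) (α, κ)|) ∧
    Summable (fun ξ : G => |α ξ *
      aderiv ξ (aderiv ξ fun p => Hdual p.1 p.2 x) (α, κ)|) ∧
    Summable (fun ξ : G => |(kapbar κ ξ : ℝ) *
      aderiv ξ (fun p => Hdual p.1 p.2 x) (α, κ)|) ∧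
    Summable (fun ξ : G => |(∑ m, (κ ξ m : ℝ) * ((κ ξ m : ℝ) - 1) / 2)
      - α ξ * (kapbar κ ξ : ℝ) + K * (kapbar κ ξ : ℝ)|) ∧
    -- and the generator identity holds:
    diffGen a (fun _ => γ) (fun _ => K) (fun _ _ => lam)
        (fun y => Hdual α κ y) x
      = dualGen a γ K lam (fun p => Hdual p.1 p.2 x) (α, κ)
        + betaDual γ K α κ * Hdual α κ x :=
  duality_generator_identity_general a R β hLS M γ K lam x hx α hαfin κ hκfin
end
end

section
/- Properties of the Liggett–Spitzer weight: Let G be a countable Abelian group, a a random walk kernel on G, R > 2 and β : G → (0,∞) with Σ_{η∈G} β(η) < ∞, and let ρ be the associated Liggett–Spitzer weight. Then: (i) 0 < ρ(ξ) < ∞ for every ξ ∈ G; (ii) ρ is summable, with Σ_{ξ∈G} ρ(ξ) = (Σ_{η∈G} β(η)) · R/(R−2) < ∞; (iii) for every η ∈ G, Σ_{ξ∈G} â(ξ,η) ρ(ξ) ≤ (R/2) ρ(η). -/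
open MeasureTheory Filter Set
open scoped ENNReal NNReal BigOperators Classical

noncomputable section

namespace LSaux

set_option linter.unusedSectionVars false

variable {G : Type} [AddCommGroup G] [Countable G] {a : G → G → ℝ}

lemma hasSum_row (ha : IsRWKernel a) (η : G) : HasSum (fun ξ => a η ξ) 1 := by
  have : (fun ξ => a η ξ) = fun ξ => a 0 ((Equiv.subRight η) ξ) := by
    funext ξ; exact ha.homog η ξ
  rw [this]
  exact ((Equiv.subRight η).hasSum_iff).2 ha.total

lemma hasSum_col (ha : IsRWKernel a) (ξ : G) : HasSum (fun η => a η ξ) 1 := by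
  have : (fun η => a η ξ) = fun η => a 0 ((Equiv.subLeft ξ) η) := by
    funext η; simp [Equiv.subLeft, ha.homog η ξ]
  rw [this]
  exact ((Equiv.subLeft ξ).hasSum_iff).2 ha.total

lemma ahat_nonneg (ha : IsRWKernel a) (η ξ : G) : 0 ≤ ahat a η ξ := by
  have := ha.nonneg η ξ; have := ha.nonneg ξ η; unfold ahat; linarith

lemma hasSum_ahat_row (ha : IsRWKernel a) (η : G) :
    HasSum (fun ξ => ahat a η ξ) 1 := by
  have h := ((hasSum_row ha η).add (hasSum_col ha η)).div_const 2
  norm_num at h; exact h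

lemma hasSum_ahat_col (ha : IsRWKernel a) (η : G) :
    HasSum (fun ξ => ahat a ξ η) 1 := by
  have h := ((hasSum_col ha η).add (hasSum_row ha η)).div_const 2
  norm_num at h; exact h

/-- ENNReal version of the symmetrized kernel -/
noncomputable def A (a : G → G → ℝ) (η ξ : G) : ℝ≥0∞ := ENNReal.ofReal (ahat a η ξ)

/-- ENNReal version of the iterated kernel -/
noncomputable def KK (a : G → G → ℝ) : ℕ → G → G → ℝ≥0∞
  | 0 => fun η ξ => if η = ξ then 1 else 0
  | (n + 1) => fun η ξ => ∑' ζ : G, KK a n η ζ * A a ζ ξ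

lemma A_row (ha : IsRWKernel a) (η : G) : ∑' ξ, A a η ξ = 1 := by
  rw [show (fun ξ => A a η ξ) = fun ξ => ENNReal.ofReal (ahat a η ξ) from rfl,
    ← ENNReal.ofReal_tsum_of_nonneg (fun ξ => ahat_nonneg ha η ξ)
      (hasSum_ahat_row ha η).summable, (hasSum_ahat_row ha η).tsum_eq,
    ENNReal.ofReal_one]

lemma A_col (ha : IsRWKernel a) (η : G) : ∑' ξ, A a ξ η = 1 := by
  rw [show (fun ξ => A a ξ η) = fun ξ => ENNReal.ofReal (ahat a ξ η) from rfl,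
    ← ENNReal.ofReal_tsum_of_nonneg (fun ξ => ahat_nonneg ha ξ η)
      (hasSum_ahat_col ha η).summable, (hasSum_ahat_col ha η).tsum_eq,
    ENNReal.ofReal_one]

lemma KK_row (ha : IsRWKernel a) : ∀ n η, ∑' ξ, KK a n η ξ = 1 := by
  intro n
  induction n with
  | zero =>
    intro η
    simp only [KK]
    rw [show (fun ξ => if η = ξ then (1:ℝ≥0∞) else 0)
        = fun ξ => if ξ = η then (1:ℝ≥0∞) else 0 from by
      funext ξ; simp [eq_comm]]
    simp [tsum_ite_eq]
  | succ n ih =>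
    intro η
    show ∑' ξ, ∑' ζ, KK a n η ζ * A a ζ ξ = 1
    rw [ENNReal.tsum_comm]
    calc ∑' ζ, ∑' ξ, KK a n η ζ * A a ζ ξ
        = ∑' ζ, KK a n η ζ * ∑' ξ, A a ζ ξ := by
          congr 1; funext ζ; exact ENNReal.tsum_mul_left
      _ = ∑' ζ, KK a n η ζ := by
          congr 1; funext ζ; rw [A_row ha, mul_one]
      _ = 1 := ih η

lemma KK_col (ha : IsRWKernel a) : ∀ n ξ, ∑' η, KK a n η ξ = 1 := by
  intro n
  induction n with
  | zero =>
    intro ξ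
    simp only [KK]
    simp [tsum_ite_eq]
  | succ n ih =>
    intro ξ
    show ∑' η, ∑' ζ, KK a n η ζ * A a ζ ξ = 1
    rw [ENNReal.tsum_comm]
    calc ∑' ζ, ∑' η, KK a n η ζ * A a ζ ξ
        = ∑' ζ, (∑' η, KK a n η ζ) * A a ζ ξ := by
          congr 1; funext ζ; exact ENNReal.tsum_mul_right
      _ = ∑' ζ, A a ζ ξ := by
          congr 1; funext ζ; rw [ih ζ, one_mul]
      _ = 1 := A_col ha ξ

lemma KK_le_one (ha : IsRWKernel a) (n : ℕ) (η ξ : G) : KK a n η ξ ≤ 1 := by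
  calc KK a n η ξ ≤ ∑' ξ', KK a n η ξ' := ENNReal.le_tsum ξ
    _ = 1 := KK_row ha n η

lemma KK_ne_top (ha : IsRWKernel a) (n : ℕ) (η ξ : G) : KK a n η ξ ≠ ⊤ :=
  ne_top_of_le_ne_top ENNReal.one_ne_top (KK_le_one ha n η ξ)

lemma kiter_eq (ha : IsRWKernel a) :
    ∀ n η ξ, kiter (ahat a) n η ξ = (KK a n η ξ).toReal := by
  intro n
  induction n with
  | zero => intro η ξ; simp only [kiter, KK]; split <;> simp
  | succ n ih =>
    intro η ξ
    show ∑' ζ, kiter (ahat a) n η ζ * ahat a ζ ξ = (∑' ζ, KK a n η ζ * A a ζ ξ).toReal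
    have hfin : ∀ ζ, KK a n η ζ * A a ζ ξ ≠ ⊤ := fun ζ =>
      ENNReal.mul_ne_top (KK_ne_top ha n η ζ) (by simp [A])
    rw [ENNReal.tsum_toReal_eq hfin]
    congr 1; funext ζ
    rw [ih η ζ, ENNReal.toReal_mul, A, ENNReal.toReal_ofReal (ahat_nonneg ha ζ ξ)]

lemma kiter_nonneg (ha : IsRWKernel a) (n : ℕ) (η ξ : G) :
    0 ≤ kiter (ahat a) n η ξ := by
  rw [kiter_eq ha]; exact ENNReal.toReal_nonneg

end LSaux

/-! ### STATEMENT 16: properties of the Liggett–Spitzer weight -/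

theorem LSweight_properties
    {G : Type} [AddCommGroup G] [Countable G]
    (a : G → G → ℝ) (R : ℝ) (β : G → ℝ) (hLS : IsLSData a R β) :
    -- (i) ρ is finite (the defining double series is summable) and positive
    (∀ ξ : G, Summable (fun q : G × ℕ =>
        ((R / 2) ^ q.2)⁻¹ * kiter (ahat a) q.2 q.1 ξ * β q.1) ∧
      0 < LSweight a R β ξ) ∧
    -- (ii) ρ is summable with total mass (Σ β) · R/(R−2)
    HasSum (fun ξ : G => LSweight a R β ξ) ((∑' η : G, β η) * (R / (R - 2))) ∧
    -- (iii) Σ_ξ â(ξ,η) ρ(ξ) ≤ (R/2) ρ(η)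
    (∀ η : G, Summable (fun ξ : G => ahat a ξ η * LSweight a R β ξ) ∧
      (∑' ξ : G, ahat a ξ η * LSweight a R β ξ) ≤ (R / 2) * LSweight a R β η) := by
  obtain ⟨ha, hR, hβpos, hβs⟩ := hLS
  have hR0 : (0:ℝ) < R := by linarith
  have hcR0 : (0:ℝ) < 2 / R := by positivity
  have hcR1 : 2 / R < 1 := by rw [div_lt_one hR0]; linarith
  set c : ℝ≥0∞ := ENNReal.ofReal (2 / R) with hc
  have hc0 : c ≠ 0 := (ENNReal.ofReal_pos.2 hcR0).ne'
  have hctop : c ≠ ⊤ := ENNReal.ofReal_ne_top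
  set B : G → ℝ≥0∞ := fun η => ENNReal.ofReal (β η) with hB
  have hBtop : ∀ η, B η ≠ ⊤ := fun η => ENNReal.ofReal_ne_top
  set T : G → G → ℕ → ℝ≥0∞ := fun ξ η n => (c ^ n * B η) * LSaux.KK a n η ξ with hT
  set P : G → ℝ≥0∞ := fun ξ => ∑' η, ∑' n, T ξ η n with hP
  have hgeo : ∑' n : ℕ, c ^ n = ENNReal.ofReal (R / (R - 2)) := by
    rw [ENNReal.tsum_geometric]
    have h1 : (1:ℝ≥0∞) - c = ENNReal.ofReal ((R - 2) / R) := by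
      rw [hc, ← ENNReal.ofReal_one, ← ENNReal.ofReal_sub _ hcR0.le]
      congr 1; field_simp
    rw [h1, ← ENNReal.ofReal_inv_of_pos (div_pos (by linarith) hR0), inv_div]
  have hgeotop : ∑' n : ℕ, c ^ n ≠ ⊤ := by rw [hgeo]; exact ENNReal.ofReal_ne_top
  have hTtop : ∀ ξ η n, T ξ η n ≠ ⊤ := fun ξ η n =>
    ENNReal.mul_ne_top (ENNReal.mul_ne_top (ENNReal.pow_ne_top hctop) (hBtop η))
      (LSaux.KK_ne_top ha n η ξ)
  have hV : ∀ ξ η, ∑' n, T ξ η n ≤ (∑' n : ℕ, c ^ n) * B η := by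
    intro ξ η
    calc ∑' n, T ξ η n ≤ ∑' n, c ^ n * B η :=
          ENNReal.tsum_le_tsum (fun n =>
            mul_le_of_le_one_right' (LSaux.KK_le_one ha n η ξ))
      _ = (∑' n : ℕ, c ^ n) * B η := ENNReal.tsum_mul_right
  have hVtop : ∀ ξ η, ∑' n, T ξ η n ≠ ⊤ := fun ξ η =>
    ne_top_of_le_ne_top (ENNReal.mul_ne_top hgeotop (hBtop η)) (hV ξ η)
  have hS : ∑' ξ, P ξ = ENNReal.ofReal ((∑' η, β η) * (R / (R - 2))) := by
    calc ∑' ξ, P ξ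
        = ∑' η, ∑' ξ, ∑' n, T ξ η n := ENNReal.tsum_comm
      _ = ∑' η, ∑' n, ∑' ξ, T ξ η n := by
          congr 1; funext η; exact ENNReal.tsum_comm
      _ = ∑' η, ∑' n : ℕ, c ^ n * B η := by
          congr 1; funext η; congr 1; funext n
          calc ∑' ξ, T ξ η n = (c ^ n * B η) * ∑' ξ, LSaux.KK a n η ξ :=
                ENNReal.tsum_mul_left
            _ = c ^ n * B η := by rw [LSaux.KK_row ha n η, mul_one]
      _ = ∑' η, (∑' n : ℕ, c ^ n) * B η := by
          congr 1; funext η; exact ENNReal.tsum_mul_right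
      _ = (∑' n : ℕ, c ^ n) * ∑' η, B η := ENNReal.tsum_mul_left
      _ = ENNReal.ofReal ((∑' η, β η) * (R / (R - 2))) := by
          rw [hgeo, hB, ← ENNReal.ofReal_tsum_of_nonneg (fun η => (hβpos η).le) hβs,
            ← ENNReal.ofReal_mul (div_nonneg hR0.le (by linarith)), mul_comm]
  have hStop : ∑' ξ, P ξ ≠ ⊤ := by rw [hS]; exact ENNReal.ofReal_ne_top
  have hPtop : ∀ ξ, P ξ ≠ ⊤ := fun ξ => ne_top_of_le_ne_top hStop (ENNReal.le_tsum ξ)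
  have hbridge : ∀ η ξ n,
      ((R / 2) ^ n)⁻¹ * kiter (ahat a) n η ξ * β η = (T ξ η n).toReal := by
    intro η ξ n
    have h2 : ((R / 2) ^ n)⁻¹ = (2 / R) ^ n := by rw [← inv_pow, inv_div]
    rw [hT]
    simp only []
    rw [ENNReal.toReal_mul, ENNReal.toReal_mul, ENNReal.toReal_pow, hc, hB,
      ENNReal.toReal_ofReal hcR0.le, ENNReal.toReal_ofReal (hβpos η).le,
      LSaux.kiter_eq ha, h2]
    ring
  have hρ : ∀ ξ, LSweight a R β ξ = (P ξ).toReal := by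
    intro ξ
    unfold LSweight
    rw [hP]
    simp only []
    rw [ENNReal.tsum_toReal_eq (fun η => hVtop ξ η)]
    congr 1; funext η
    rw [ENNReal.tsum_toReal_eq (fun n => hTtop ξ η n)]
    exact tsum_congr (fun n => hbridge η ξ n)
  refine ⟨fun ξ => ⟨?_, ?_⟩, ?_, fun η => ?_⟩
  · -- (i) summability
    have hprod : ∑' q : G × ℕ, T ξ q.1 q.2 = P ξ := by
      rw [ENNReal.tsum_prod']
    exact (ENNReal.summable_toReal (hprod ▸ hPtop ξ)).congr
      (fun q => (hbridge q.1 ξ q.2).symm)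
  · -- (i) positivity
    rw [hρ ξ]
    refine ENNReal.toReal_pos ?_ (hPtop ξ)
    have h1 : B ξ ≤ P ξ := by
      calc B ξ = T ξ ξ 0 := by simp [hT, LSaux.KK]
        _ ≤ ∑' n, T ξ ξ n := ENNReal.le_tsum 0
        _ ≤ P ξ := by rw [hP]; exact ENNReal.le_tsum ξ
    intro h0
    rw [h0, le_zero_iff] at h1
    exact (ENNReal.ofReal_pos.2 (hβpos ξ)).ne' h1
  · -- (ii)
    have hsumρ : Summable (fun ξ => LSweight a R β ξ) :=
      (ENNReal.summable_toReal hStop).congr (fun ξ => (hρ ξ).symm)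
    have htsum : ∑' ξ, LSweight a R β ξ = (∑' η, β η) * (R / (R - 2)) := by
      calc ∑' ξ, LSweight a R β ξ = ∑' ξ, (P ξ).toReal := tsum_congr hρ
        _ = (∑' ξ, P ξ).toReal := (ENNReal.tsum_toReal_eq hPtop).symm
        _ = (∑' η, β η) * (R / (R - 2)) := by
            rw [hS]
            exact ENNReal.toReal_ofReal
              (mul_nonneg (tsum_nonneg (fun η => (hβpos η).le)) (div_nonneg hR0.le (by linarith)))
    exact htsum ▸ hsumρ.hasSum
  · -- (iii)
    set Q : ℝ≥0∞ := ∑' ξ, LSaux.A a ξ η * P ξ with hQ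
    have hQeq : Q = ∑' ζ, ∑' n, (c ^ n * B ζ) * LSaux.KK a (n+1) ζ η := by
      rw [hQ]
      calc ∑' ξ, LSaux.A a ξ η * P ξ
          = ∑' ξ, ∑' ζ, ∑' n, LSaux.A a ξ η * T ξ ζ n := by
            congr 1; funext ξ
            rw [hP]
            simp only []
            rw [← ENNReal.tsum_mul_left]
            congr 1; funext ζ; exact ENNReal.tsum_mul_left.symm
        _ = ∑' ζ, ∑' n, ∑' ξ, LSaux.A a ξ η * T ξ ζ n := by
            rw [ENNReal.tsum_comm]; congr 1; funext ζ; exact ENNReal.tsum_comm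
        _ = ∑' ζ, ∑' n, (c ^ n * B ζ) * LSaux.KK a (n+1) ζ η := by
            congr 1; funext ζ; congr 1; funext n
            calc ∑' ξ, LSaux.A a ξ η * T ξ ζ n
                = ∑' ξ, (c ^ n * B ζ) * (LSaux.KK a n ζ ξ * LSaux.A a ξ η) := by
                  congr 1; funext ξ; rw [hT]; ring
              _ = (c ^ n * B ζ) * ∑' ξ, LSaux.KK a n ζ ξ * LSaux.A a ξ η :=
                  ENNReal.tsum_mul_left
              _ = (c ^ n * B ζ) * LSaux.KK a (n+1) ζ η := rfl
    have hcQ : c * Q ≤ P η := by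
      rw [hQeq, hP]
      calc c * ∑' ζ, ∑' n, (c ^ n * B ζ) * LSaux.KK a (n+1) ζ η
          = ∑' ζ, ∑' n, (c ^ (n+1) * B ζ) * LSaux.KK a (n+1) ζ η := by
            rw [← ENNReal.tsum_mul_left]
            congr 1; funext ζ
            rw [← ENNReal.tsum_mul_left]
            congr 1; funext n; ring
        _ ≤ ∑' ζ, ∑' n, (c ^ n * B ζ) * LSaux.KK a n ζ η :=
            ENNReal.tsum_le_tsum (fun ζ =>
              ENNReal.tsum_comp_le_tsum_of_injective Nat.succ_injective
                (fun n => (c ^ n * B ζ) * LSaux.KK a n ζ η))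
        _ = ∑' ζ, ∑' n, T η ζ n := rfl
    have hinv : c⁻¹ = ENNReal.ofReal (R / 2) := by
      rw [hc, ← ENNReal.ofReal_inv_of_pos hcR0, inv_div]
    have hQle : Q ≤ ENNReal.ofReal (R / 2) * P η := by
      calc Q = c⁻¹ * (c * Q) := by
            rw [← mul_assoc, ENNReal.inv_mul_cancel hc0 hctop, one_mul]
        _ ≤ c⁻¹ * P η := mul_le_mul_right hcQ _
        _ = ENNReal.ofReal (R / 2) * P η := by rw [hinv]
    have hQtop : Q ≠ ⊤ :=
      ne_top_of_le_ne_top (ENNReal.mul_ne_top ENNReal.ofReal_ne_top (hPtop η)) hQle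
    have hAPtop : ∀ ξ, LSaux.A a ξ η * P ξ ≠ ⊤ := fun ξ =>
      ENNReal.mul_ne_top (by simp [LSaux.A]) (hPtop ξ)
    have hterm : ∀ ξ, ahat a ξ η * LSweight a R β ξ = (LSaux.A a ξ η * P ξ).toReal := by
      intro ξ
      rw [ENNReal.toReal_mul, LSaux.A, ENNReal.toReal_ofReal (LSaux.ahat_nonneg ha ξ η),
        hρ ξ]
    refine ⟨(ENNReal.summable_toReal hQtop).congr (fun ξ => (hterm ξ).symm), ?_⟩
    have h1 : ∑' ξ, ahat a ξ η * LSweight a R β ξ = Q.toReal := by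
      rw [tsum_congr hterm, ← ENNReal.tsum_toReal_eq hAPtop]
    rw [h1, hρ η]
    calc Q.toReal ≤ (ENNReal.ofReal (R / 2) * P η).toReal :=
          ENNReal.toReal_mono (ENNReal.mul_ne_top ENNReal.ofReal_ne_top (hPtop η)) hQle
      _ = (R / 2) * (P η).toReal := by
          rw [ENNReal.toReal_mul, ENNReal.toReal_ofReal (by linarith : (0:ℝ) ≤ R/2)]
end
end

section
/- Explicit first moments for branching random walk with immigration: Let G be a countable Abelian group, a a random walk kernel on G, ā(ξ,η) := a(η,ξ), and for t ≥ 0 define ā_t(ξ,η) := e^{−t} Σ_{n=0}^∞ (t^n/n!) ā^{(n)}(ξ,η) and a_t(η,ξ) := e^{−t} Σ_{n=0}^∞ (t^n/n!) a^{(n)}(η,ξ). Fix constants γ, K, λ > 0 and finitely supported initial data α(0) : G → [0,∞) and π(0) : G → ℕ₀. Then the function h_ξ(t) := e^{γKt} Σ_{η∈G} ā_t(ξ,η) ( α_η(0) + (λ/K)(1 − e^{−γKt}) π_η(0) ) satisfies h_ξ(0) = α_ξ(0) and, for every ξ ∈ G and t ≥ 0, d/dt h_ξ(t) = Σ_{η∈G}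 (ā(ξ,η) − δ_{ξ,η}) h_η(t) + γK h_ξ(t) + γλ Σ_{η∈G} π_η(0) a_t(η,ξ). -/
open MeasureTheory Filter Set
open scoped ENNReal NNReal BigOperators Classical

noncomputable section

/-
Since `α0` and `π0` have finite support, `h ξ t` is a finite combination of the entries
`ā_t(ξ, η)`. Each of them satisfies Kolmogorov's backward equation `d/dt ā_t = (ā - I) ā_t`:
differentiate the exponential series termwise and use the Chapman–Kolmogorov identity
`ā⁽ⁿ⁺¹⁾ = ā ā⁽ⁿ⁾`, which for nonnegative stochastic kernels is an instance of Tonelli's theorem.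
The product rule applied to the factors `e^{γKt}` and `1 - e^{-γKt}` produces the growth and
immigration terms, and the latter is rewritten with `ā_t(ξ, η) = a_t(η, ξ)`.
-/

theorem hasSum_tsum_mul_of_nonneg {κ ι : Type*} {w : κ → ℝ} (hw0 : ∀ k, 0 ≤ w k)
    (hw : Summable w) {F : κ → ι → ℝ} {s : κ → ℝ} {C : ℝ} (hF0 : ∀ k i, 0 ≤ F k i)
    (hF : ∀ k, HasSum (F k) (s k)) (hsC : ∀ k, s k ≤ C) :
    HasSum (fun i => ∑' k, w k * F k i) (∑' k, w k * s k) := by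
  have hrow : ∀ k, HasSum (fun i => w k * F k i) (w k * s k) := fun k => (hF k).mul_left _
  have hrowSum : Summable fun k => w k * s k :=
    (hw.mul_right C).of_nonneg_of_le (fun k => mul_nonneg (hw0 k) ((hF k).nonneg (hF0 k)))
      fun k => mul_le_mul_of_nonneg_left (hsC k) (hw0 k)
  have hunc : Summable fun q : κ × ι => w q.1 * F q.1 q.2 :=
    (summable_prod_of_nonneg fun q => mul_nonneg (hw0 q.1) (hF0 q.1 q.2)).2
      ⟨fun k => (hrow k).summable, hrowSum.congr fun k => ((hrow k).tsum_eq).symm⟩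
  have htot : HasSum (fun q : κ × ι => w q.1 * F q.1 q.2) (∑' k, w k * s k) := by
    rw [(hunc.hasSum.prod_fiberwise hrow).tsum_eq]
    exact hunc.hasSum
  have hswap := (Equiv.prodComm ι κ).hasSum_iff.2 htot
  exact hswap.prod_fiberwise fun i => (hswap.summable.prod_factor i).hasSum

theorem tsum_sub_ite_mul {G : Type} {w f : G → ℝ} (ξ : G) (h : Summable fun η => w η * f η) :
    ∑' η, (w η - if ξ = η then 1 else 0) * f η = ∑' η, w η * f η - f ξ := by
  simp only [sub_mul, ite_mul, one_mul, zero_mul]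
  rw [h.tsum_sub (summable_of_ne_finset_zero (s := {ξ}) fun η hη => by simp_all [eq_comm]),
    tsum_ite_eq']

section ExponentialSeries

open Nat

theorem Real.hasSum_pow_div_factorial (t : ℝ) : HasSum (fun n => t ^ n / n !) (Real.exp t) := by
  rw [Real.exp_eq_exp_ℝ]
  exact NormedSpace.expSeries_div_hasSum_exp t

theorem summable_pow_div_factorial_mul {c : ℕ → ℝ} {C : ℝ} (hc : ∀ n, |c n| ≤ C) (t : ℝ) :
    Summable fun n => t ^ n / n ! * c n :=
  ((Real.summable_pow_div_factorial |t|).mul_right C).of_norm_bounded fun n => by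
    simp only [norm_mul, norm_div, norm_pow, Real.norm_eq_abs, Nat.abs_cast]
    gcongr
    exact hc n

theorem hasDerivAt_tsum_pow_div_factorial_mul {c : ℕ → ℝ} {C : ℝ} (hc : ∀ n, |c n| ≤ C)
    (t : ℝ) :
    HasDerivAt (fun s => ∑' n, s ^ n / n ! * c n) (∑' n, t ^ n / n ! * c (n + 1)) t := by
  have hshift : (fun s => ∑' n, s ^ n / n ! * c n)
      = fun s => c 0 + ∑' n, s ^ (n + 1) / (n + 1)! * c (n + 1) := funext fun s => by
    rw [(summable_pow_div_factorial_mul hc s).tsum_eq_zero_add]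
    simp
  rw [hshift]
  refine HasDerivAt.const_add _ ?_
  set R := |t| + 1
  have hR : t ∈ Set.Ioo (-R) R := ⟨by linarith [neg_abs_le t], by linarith [le_abs_self t]⟩
  refine hasDerivAt_tsum_of_isPreconnected
    (g := fun n s => s ^ (n + 1) / (n + 1)! * c (n + 1))
    (g' := fun n s => s ^ n / n ! * c (n + 1))
    ((Real.summable_pow_div_factorial R).mul_right C) isOpen_Ioo (convex_Ioo _ _).isPreconnected
    (fun n y _ => ?_) (fun n y hy => ?_) hR ?_ hR
  · refine (((hasDerivAt_pow (n + 1) y).div_const ((n + 1)! : ℝ)).mul_const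
      (c (n + 1))).congr_deriv ?_
    rw [Nat.factorial_succ]
    push_cast
    field_simp
  · simp only [norm_mul, norm_div, norm_pow, Real.norm_eq_abs, Nat.abs_cast]
    gcongr
    · exact abs_le.2 ⟨hy.1.le, hy.2.le⟩
    · exact hc (n + 1)
  · exact (summable_nat_add_iff 1).2 (summable_pow_div_factorial_mul hc t)

end ExponentialSeries

theorem ctk_zero {G : Type} (p : G → G → ℝ) (η ξ : G) :
    ctk p 0 η ξ = if η = ξ then 1 else 0 := by
  rw [ctk, tsum_eq_single 0 fun n hn => by simp [hn]]
  simp [kiter]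

structure IsStochastic {G : Type} (p : G → G → ℝ) : Prop where
  nonneg : ∀ η ξ, 0 ≤ p η ξ
  hasSum : ∀ η, HasSum (p η) 1

namespace IsStochastic

open Nat

variable {G : Type} {p : G → G → ℝ}

theorem le_one (hp : IsStochastic p) (η ξ : G) : p η ξ ≤ 1 :=
  le_hasSum (hp.hasSum η) ξ fun ζ _ => hp.nonneg η ζ

theorem abs_le_one (hp : IsStochastic p) (η ξ : G) : |p η ξ| ≤ 1 :=
  abs_le.2 ⟨by linarith [hp.nonneg η ξ], hp.le_one η ξ⟩

theorem summable_mul_of_abs_le (hp : IsStochastic p) {f : G → ℝ} {C : ℝ}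
    (hf : ∀ ζ, |f ζ| ≤ C) (η : G) : Summable fun ζ => p η ζ * f ζ :=
  ((hp.hasSum η).summable.mul_right C).of_norm_bounded fun ζ => by
    rw [Real.norm_eq_abs, abs_mul, abs_of_nonneg (hp.nonneg η ζ)]
    exact mul_le_mul_of_nonneg_left (hf ζ) (hp.nonneg η ζ)

theorem kiter (hp : IsStochastic p) (n : ℕ) : IsStochastic (kiter p n) := by
  induction n with
  | zero =>
    refine ⟨fun η ξ => by simp only [_root_.kiter]; positivity, fun η => ?_⟩
    simpa [_root_.kiter, eq_comm] using hasSum_ite_eq η (1 : ℝ)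
  | succ n ih =>
    refine ⟨fun η ξ => tsum_nonneg fun ζ => mul_nonneg (ih.nonneg η ζ) (hp.nonneg ζ ξ),
      fun η => ?_⟩
    have h := hasSum_tsum_mul_of_nonneg (ih.nonneg η) (ih.hasSum η).summable hp.nonneg
      hp.hasSum (fun _ => le_rfl) (C := 1)
    change HasSum (fun ξ => ∑' ζ, _root_.kiter p n η ζ * p ζ ξ) 1
    simpa [(ih.hasSum η).tsum_eq] using h

theorem kiter_succ' (hp : IsStochastic p) (n : ℕ) (η ξ : G) :
    _root_.kiter p (n + 1) η ξ = ∑' ζ, p η ζ * _root_.kiter p n ζ ξ := by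
  induction n generalizing η ξ with
  | zero => simp [_root_.kiter]
  | succ n ih =>
    have hF : ∀ β,
        HasSum (fun ζ => _root_.kiter p n β ζ * p ζ ξ) (_root_.kiter p (n + 1) β ξ) := fun β =>
      ((hp.kiter n).summable_mul_of_abs_le (hp.abs_le_one · ξ) β).hasSum
    have h := hasSum_tsum_mul_of_nonneg (hp.nonneg η) (hp.hasSum η).summable
      (fun β ζ => mul_nonneg ((hp.kiter n).nonneg β ζ) (hp.nonneg ζ ξ)) hF
      (fun β => (hp.kiter (n + 1)).le_one β ξ)
    rw [← h.tsum_eq]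
    refine tsum_congr fun ζ => ?_
    rw [ih, ← tsum_mul_right]
    exact tsum_congr fun β => mul_assoc _ _ _

theorem kiter_abar (hp : IsStochastic p) (n : ℕ) (ξ η : G) :
    _root_.kiter (abar p) n ξ η = _root_.kiter p n η ξ := by
  induction n generalizing ξ η with
  | zero => simp [_root_.kiter, eq_comm]
  | succ n ih =>
    rw [hp.kiter_succ']
    exact tsum_congr fun ζ => by rw [ih, abar, mul_comm]

theorem ctk_abar (hp : IsStochastic p) (t : ℝ) (ξ η : G) :
    _root_.ctk (abar p) t ξ η = _root_.ctk p t η ξ := by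
  simp only [_root_.ctk, hp.kiter_abar]

theorem ctk (hp : IsStochastic p) {t : ℝ} (ht : 0 ≤ t) : IsStochastic (_root_.ctk p t) := by
  refine ⟨fun η ξ => mul_nonneg (Real.exp_nonneg _) (tsum_nonneg fun n =>
    mul_nonneg (by positivity) ((hp.kiter n).nonneg η ξ)), fun η => ?_⟩
  have h := hasSum_tsum_mul_of_nonneg (fun n => by positivity)
    (Real.summable_pow_div_factorial t) (fun n => (hp.kiter n).nonneg η)
    (fun n => (hp.kiter n).hasSum η) (fun _ => le_rfl) (C := 1)
  simp only [mul_one, (Real.hasSum_pow_div_factorial t).tsum_eq] at h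
  change HasSum (fun ξ => Real.exp (-t) * _) 1
  simpa [← Real.exp_add] using h.mul_left (Real.exp (-t))

theorem hasDerivAt_ctk (hp : IsStochastic p) {t : ℝ} (ht : 0 ≤ t) (η ξ : G) :
    HasDerivAt (fun s => _root_.ctk p s η ξ)
      (∑' ζ, p η ζ * _root_.ctk p t ζ ξ - _root_.ctk p t η ξ) t := by
  set E : G → ℝ := fun ζ => ∑' n, t ^ n / n ! * _root_.kiter p n ζ ξ
  have hE : ∀ ζ, _root_.ctk p t ζ ξ = Real.exp (-t) * E ζ := fun ζ => rfl
  have hE_le : ∀ ζ, E ζ ≤ Real.exp t := fun ζ => by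
    have := (hp.ctk ht).le_one ζ ξ
    rw [hE, Real.exp_neg, inv_mul_le_iff₀ (Real.exp_pos t), mul_one] at this
    exact this
  have hswap := hasSum_tsum_mul_of_nonneg (hp.nonneg η) (hp.hasSum η).summable
    (fun ζ n => mul_nonneg (by positivity) ((hp.kiter n).nonneg ζ ξ))
    (fun ζ => (summable_pow_div_factorial_mul (fun n => (hp.kiter n).abs_le_one ζ ξ) t).hasSum)
    hE_le
  have hshift : ∑' n, t ^ n / n ! * _root_.kiter p (n + 1) η ξ = ∑' ζ, p η ζ * E ζ := by
    rw [← hswap.tsum_eq]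
    refine tsum_congr fun n => ?_
    rw [hp.kiter_succ', ← tsum_mul_left]
    exact tsum_congr fun ζ => by ring
  have hser := hasDerivAt_tsum_pow_div_factorial_mul (fun n => (hp.kiter n).abs_le_one η ξ) t
  refine ((Real.hasDerivAt_exp (-t)).comp t (hasDerivAt_neg t) |>.mul hser).congr_deriv ?_
  simp only [Function.comp_apply, hshift, hE, mul_left_comm _ (Real.exp (-t)), tsum_mul_left,
    E]
  ring

theorem hasDerivAt_sum_ctk_mul (hp : IsStochastic p) (S : Finset G) {c : G → ℝ → ℝ}
    {c' : G → ℝ} {t : ℝ} (hc : ∀ η ∈ S, HasDerivAt (c η) (c' η) t) (ht : 0 ≤ t) (ξ : G) :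
    HasDerivAt (fun s => ∑ η ∈ S, _root_.ctk p s ξ η * c η s)
      (∑' ζ, (p ξ ζ - if ξ = ζ then 1 else 0) * ∑ η ∈ S, _root_.ctk p t ζ η * c η t
        + ∑ η ∈ S, _root_.ctk p t ξ η * c' η) t := by
  have hterm : ∀ ζ η, |_root_.ctk p t ζ η * c η t| ≤ |c η t| := fun ζ η => by
    rw [abs_mul]
    exact mul_le_of_le_one_left (abs_nonneg _) ((hp.ctk ht).abs_le_one ζ η)
  have hbound : ∀ ζ, |∑ η ∈ S, _root_.ctk p t ζ η * c η t| ≤ ∑ η ∈ S, |c η t| := fun ζ =>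
    (Finset.abs_sum_le_sum_abs _ _).trans <| Finset.sum_le_sum fun η _ => hterm ζ η
  refine (HasDerivAt.fun_sum fun η hη =>
    (hp.hasDerivAt_ctk ht ξ η).mul (hc η hη)).congr_deriv ?_
  rw [tsum_sub_ite_mul ξ (hp.summable_mul_of_abs_le hbound ξ)]
  simp only [Finset.mul_sum]
  rw [Summable.tsum_finsetSum fun η _ => hp.summable_mul_of_abs_le (hterm · η) ξ]
  simp only [← Finset.sum_sub_distrib, ← Finset.sum_add_distrib, ← mul_assoc, tsum_mul_right]
  exact Finset.sum_congr rfl fun η _ => by ring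

end IsStochastic

theorem IsRWKernel.isStochastic {G : Type} [AddCommGroup G] {a : G → G → ℝ}
    (ha : IsRWKernel a) : IsStochastic a :=
  ⟨ha.nonneg, fun η => by
    rw [show a η = fun ξ => a 0 (ξ - η) from funext (ha.homog η)]
    exact (Equiv.subRight η).hasSum_iff.2 ha.total⟩

theorem IsRWKernel.isStochastic_abar {G : Type} [AddCommGroup G] {a : G → G → ℝ}
    (ha : IsRWKernel a) : IsStochastic (abar a) :=
  ⟨fun η ξ => ha.nonneg ξ η, fun η => by
    rw [show abar a η = fun ξ => a 0 (η - ξ) from funext fun ξ => ha.homog ξ η]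
    exact (Equiv.subLeft η).hasSum_iff.2 ha.total⟩

theorem branching_rw_immigration_first_moments_general
    {G : Type} [AddCommGroup G]
    (a : G → G → ℝ) (ha : IsRWKernel a)
    (γ K lam : ℝ) (hK : 0 < K)
    (α0 : G → ℝ) (hα0fin : (Function.support α0).Finite)
    (π0 : G → ℕ) (hπ0fin : (Function.support π0).Finite)
    (h : G → ℝ → ℝ)
    (hdef : h = fun ξ t => Real.exp (γ * K * t) *
      ∑' η : G, ctk (abar a) t ξ η *
        (α0 η + (lam / K) * (1 - Real.exp (-(γ * K * t))) * (π0 η : ℝ))) :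
    (∀ ξ : G, h ξ 0 = α0 ξ) ∧
    ∀ (ξ : G) (t : ℝ), 0 ≤ t →
      HasDerivAt (fun s => h ξ s)
        ((∑' η : G, (abar a ξ η - (if ξ = η then (1:ℝ) else 0)) * h η t)
          + γ * K * h ξ t
          + γ * lam * ∑' η : G, (π0 η : ℝ) * ctk a t η ξ) t := by
  set c : G → ℝ → ℝ := fun η s => α0 η + lam / K * (1 - Real.exp (-(γ * K * s))) * π0 η
  set S := (hα0fin.union hπ0fin).toFinset
  have hS : ∀ η ∉ S, α0 η = 0 ∧ π0 η = 0 := fun η hη => by simpa [S, not_or] using hη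
  have hrepr : ∀ ξ s, h ξ s = Real.exp (γ * K * s) * ∑ η ∈ S, ctk (abar a) s ξ η * c η s :=
    fun ξ s => by
      rw [hdef]
      exact congrArg _ (tsum_eq_sum fun η hη => by simp [hS η hη])
  refine ⟨fun ξ => by simp [hdef, ctk_zero], fun ξ t ht => ?_⟩
  have hc : ∀ η, HasDerivAt (c η) (γ * lam * Real.exp (-(γ * K * t)) * π0 η) t := fun η => by
    refine ((((((hasDerivAt_id t).const_mul (γ * K)).neg.exp.const_sub 1).const_mul
      (lam / K)).mul_const (π0 η : ℝ)).const_add (α0 η)).congr_deriv ?_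
    simp only [Pi.neg_apply, id]
    field_simp
  have hπ : ∑' η, (π0 η : ℝ) * ctk a t η ξ = ∑ η ∈ S, (π0 η : ℝ) * ctk (abar a) t ξ η := by
    rw [tsum_eq_sum (s := S) fun η hη => by simp [hS η hη]]
    simp only [ha.isStochastic.ctk_abar]
  rw [show (fun s => h ξ s) = _ from funext (hrepr ξ)]
  refine (((hasDerivAt_id t).const_mul (γ * K)).exp.mul
    (ha.isStochastic_abar.hasDerivAt_sum_ctk_mul S (fun η _ => hc η) ht ξ)).congr_deriv ?_
  have himm : ∑ η ∈ S, ctk (abar a) t ξ η * (γ * lam * Real.exp (-(γ * K * t)) * π0 η)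
      = γ * lam * Real.exp (-(γ * K * t)) * ∑ η ∈ S, π0 η * ctk (abar a) t ξ η := by
    rw [Finset.mul_sum]
    exact Finset.sum_congr rfl fun η _ => by ring
  have hexp : Real.exp (γ * K * t) * Real.exp (-(γ * K * t)) = 1 := by
    rw [← Real.exp_add, add_neg_cancel, Real.exp_zero]
  simp only [hrepr _ t, hπ, himm, id, mul_left_comm _ (Real.exp (γ * K * t)), tsum_mul_left]
  linear_combination (γ * lam * ∑ η ∈ S, π0 η * ctk (abar a) t ξ η) * hexp

theorem branching_rw_immigration_first_moments
    {G : Type} [AddCommGroup G] [Countable G]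
    (a : G → G → ℝ) (ha : IsRWKernel a)
    (γ K lam : ℝ) (hγ : 0 < γ) (hK : 0 < K) (hlam : 0 < lam)
    (α0 : G → ℝ) (hα0pos : ∀ ξ, 0 ≤ α0 ξ) (hα0fin : (Function.support α0).Finite)
    (π0 : G → ℕ) (hπ0fin : (Function.support π0).Finite)
    (h : G → ℝ → ℝ)
    (hdef : h = fun ξ t => Real.exp (γ * K * t) *
      ∑' η : G, ctk (abar a) t ξ η *
        (α0 η + (lam / K) * (1 - Real.exp (-(γ * K * t))) * (π0 η : ℝ))) :
    (∀ ξ : G, h ξ 0 = α0 ξ) ∧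
    ∀ (ξ : G) (t : ℝ), 0 ≤ t →
      HasDerivAt (fun s => h ξ s)
        ((∑' η : G, (abar a ξ η - (if ξ = η then (1:ℝ) else 0)) * h η t)
          + γ * K * h ξ t
          + γ * lam * ∑' η : G, (π0 η : ℝ) * ctk a t η ξ) t :=
  branching_rw_immigration_first_moments_general a ha γ K lam hK α0 hα0fin π0 hπ0fin h hdef
end
end
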